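/- arXiv:2404.17694 — 6 statements merged into one kernel-verified Lean document; each statement's English description precedes it below -/
import Mathlib

section
/- Let n be an odd positive integer. Then the limit A_n = lim_{k→∞} ∫₀^π |cosⁿ x − cosⁿ(kx)| dx (k ranging over the positive integers) exists and equals (8/(2^{n−1}·π)) · Σ_{j=0}^{(n−1)/2} C(n,j)/(n−2j)², where C(n,j) denotes the binomial coefficient. -/
/-!
For large `k` the function `x ↦ cos (k x)` runs through whole periods on any short interval, on
which `cos x` hardly moves. Hence `∫₀^π F(x, kx) dx → (1/2π) ∫₀^π ∫₀^{2π} F(x, t) dt dx` for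
every `F` that is Lipschitz in `x` and `2π`-periodic in `t`: cut `[0, π]` into `m` pieces, freeze
`x` on each, let `k → ∞` and then `m → ∞`. For `F(x, t) = |cosⁿ x - cosⁿ t|` the limit is
`(1/π) ∫₀^π ∫₀^π |cosⁿ x - cosⁿ t| dt dx`, and since `cosⁿ` decreases on `[0, π]` for odd `n`,
this double integral is `2 ∫₀^π (π - 2x) cosⁿ x dx`. Expanding
`(2 cos x)ⁿ = ∑ⱼ C(n,j) cos ((n - 2j) x)` and using `∫₀^π (π - 2x) cos (m x) dx = 4 / m²` for odd
`m` gives the value.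
-/

open Real Filter MeasureTheory Topology

open scoped NNReal

namespace Function.Periodic

variable {g : ℝ → ℝ} {T : ℝ}

theorem abs_intervalIntegral_sub_le (hg : Periodic g T) (hT : 0 < T)
    (hint : ∀ a b, IntervalIntegrable g volume a b) (s t : ℝ) :
    |(∫ x in s..t, g x) - (t - s) / T * ∫ x in 0..T, g x| ≤ 2 * ∫ x in 0..T, |g x| := by
  set N := ⌊(t - s) / T⌋
  set u := s + N * T
  have hu : u ≤ t ∧ t ≤ u + T := by
    have h1 := Int.floor_le ((t - s) / T)
    have h2 := Int.lt_floor_add_one ((t - s) / T)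
    rw [le_div_iff₀ hT] at h1
    rw [div_lt_iff₀ hT] at h2
    constructor <;> nlinarith
  have hperiods : ∫ x in s..u, g x = N * ∫ x in 0..T, g x := by
    have := hg.intervalIntegral_add_zsmul_eq N s hint
    rwa [hg.intervalIntegral_add_eq s 0, zero_add, zsmul_eq_mul, zsmul_eq_mul] at this
  have hnorm : |∫ x in 0..T, g x| ≤ ∫ x in 0..T, |g x| :=
    intervalIntegral.abs_integral_le_integral_abs hT.le
  have htail : |∫ x in u..t, g x| ≤ ∫ x in 0..T, |g x| :=
    calc |∫ x in u..t, g x| ≤ ∫ x in u..t, |g x| :=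
          intervalIntegral.abs_integral_le_integral_abs hu.1
      _ ≤ ∫ x in u..u + T, |g x| :=
        intervalIntegral.integral_mono_interval le_rfl hu.1 hu.2
          (Eventually.of_forall fun _ => abs_nonneg _) (hint _ _).abs
      _ = ∫ x in 0..T, |g x| := by
        simpa using (hg.comp abs).intervalIntegral_add_eq u 0
  have hfrac : |(t - u) / T * ∫ x in 0..T, g x| ≤ ∫ x in 0..T, |g x| := by
    rw [abs_mul, abs_of_nonneg (div_nonneg (sub_nonneg.2 hu.1) hT.le)]
    exact (mul_le_of_le_one_left (abs_nonneg _) ((div_le_one hT).2 (by linarith))).trans hnorm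
  have hsplit : (∫ x in s..t, g x) - (t - s) / T * ∫ x in 0..T, g x
      = (∫ x in u..t, g x) - (t - u) / T * ∫ x in 0..T, g x := by
    rw [← intervalIntegral.integral_add_adjacent_intervals (hint s u) (hint u t), hperiods]
    field_simp
    ring
  rw [hsplit]
  linarith [abs_sub (∫ x in u..t, g x) ((t - u) / T * ∫ x in 0..T, g x)]

theorem abs_intervalIntegral_comp_mul_sub_le (hg : Periodic g T) (hT : 0 < T)
    (hint : ∀ a b, IntervalIntegrable g volume a b) {c : ℝ} (hc : 0 < c) (a b : ℝ) :
    |(∫ x in a..b, g (c * x)) - (b - a) / T * ∫ x in 0..T, g x|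
      ≤ 2 * (∫ x in 0..T, |g x|) / c := by
  have hscale : (∫ x in a..b, g (c * x)) - (b - a) / T * ∫ x in 0..T, g x
      = c⁻¹ * ((∫ x in c * a..c * b, g x) - (c * b - c * a) / T * ∫ x in 0..T, g x) := by
    rw [intervalIntegral.integral_comp_mul_left g hc.ne', smul_eq_mul]
    field_simp
  rw [hscale, abs_mul, abs_of_pos (inv_pos.2 hc), inv_mul_le_iff₀ hc, mul_div_cancel₀ _ hc.ne']
  exact hg.abs_intervalIntegral_sub_le hT hint _ _

end Function.Periodic

section Averaging

variable {F : ℝ → ℝ → ℝ} {T : ℝ} {L : ℝ≥0}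

theorem abs_intervalIntegral_sub_le_of_lipschitzWith (hF : Continuous F.uncurry)
    (hlip : ∀ y, LipschitzWith L (F · y)) (hT : 0 ≤ T) (x x' : ℝ) :
    |(∫ t in 0..T, F x t) - ∫ t in 0..T, F x' t| ≤ T * (L * |x - x'|) := by
  rw [← intervalIntegral.integral_sub ((hF.uncurry_left x).intervalIntegrable _ _)
    ((hF.uncurry_left x').intervalIntegrable _ _)]
  have := intervalIntegral.norm_integral_le_of_norm_le_const (a := 0) (b := T)
    (f := fun t => F x t - F x' t) fun t _ => by
      simpa [Real.dist_eq] using (hlip t).dist_le_mul x x'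
  simpa [abs_of_nonneg hT, mul_comm] using this

theorem abs_intervalIntegral_comp_mul_sub_average_le (hF : Continuous F.uncurry)
    (hper : ∀ x, Function.Periodic (F x) T) (hT : 0 < T) (hlip : ∀ y, LipschitzWith L (F · y))
    {u v : ℝ} (huv : u ≤ v) {k : ℝ} (hk : 0 < k) :
    |(∫ x in u..v, F x (k * x)) - (∫ x in u..v, ∫ t in 0..T, F x t) / T|
      ≤ 2 * L * (v - u) ^ 2 + 2 * (∫ t in 0..T, |F u t|) / k := by
  set G := fun x => ∫ t in 0..T, F x t
  have hG : Continuous G :=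
    intervalIntegral.continuous_parametric_intervalIntegral_of_continuous' hF 0 T
  have hnear : ∀ x ∈ Set.uIoc u v, |x - u| ≤ v - u := fun x hx => by
    rw [Set.uIoc_of_le huv] at hx
    rw [abs_of_nonneg (by linarith [hx.1])]
    linarith [hx.2]
  have hfreeze :
      |(∫ x in u..v, F x (k * x)) - ∫ x in u..v, F u (k * x)| ≤ L * (v - u) * (v - u) := by
    rw [← intervalIntegral.integral_sub (by apply Continuous.intervalIntegrable; fun_prop)
      (by apply Continuous.intervalIntegrable; fun_prop)]
    have := intervalIntegral.norm_integral_le_of_norm_le_const (C := L * (v - u))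
      (f := fun x => F x (k * x) - F u (k * x)) fun x hx => by
        rw [Real.norm_eq_abs, ← Real.dist_eq]
        exact ((hlip _).dist_le_mul x u).trans
          (mul_le_mul_of_nonneg_left (hnear x hx) L.coe_nonneg)
    simpa [abs_of_nonneg (sub_nonneg.2 huv)] using this
  have hperiodic : |(∫ x in u..v, F u (k * x)) - (v - u) / T * G u|
      ≤ 2 * (∫ t in 0..T, |F u t|) / k :=
    (hper u).abs_intervalIntegral_comp_mul_sub_le hT
      (fun _ _ => (hF.uncurry_left u).intervalIntegrable _ _) hk u v
  have hmean : |(v - u) / T * G u - (∫ x in u..v, G x) / T| ≤ L * (v - u) * (v - u) := by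
    have hsub : (v - u) / T * G u - (∫ x in u..v, G x) / T = (∫ x in u..v, (G u - G x)) / T := by
      rw [intervalIntegral.integral_sub intervalIntegrable_const (hG.intervalIntegrable _ _),
        intervalIntegral.integral_const, smul_eq_mul]
      ring
    rw [hsub, abs_div, abs_of_pos hT, div_le_iff₀ hT]
    have := intervalIntegral.norm_integral_le_of_norm_le_const (C := T * (L * (v - u)))
      (f := fun x => G u - G x) fun x hx => by
        rw [Real.norm_eq_abs]
        refine (abs_intervalIntegral_sub_le_of_lipschitzWith hF hlip hT.le u x).trans ?_
        rw [abs_sub_comm]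
        gcongr
        exact hnear x hx
    rw [Real.norm_eq_abs, abs_of_nonneg (sub_nonneg.2 huv)] at this
    linarith [show T * (L * (v - u)) * (v - u) = L * (v - u) * (v - u) * T by ring]
  linarith [abs_sub_le (∫ x in u..v, F x (k * x)) (∫ x in u..v, F u (k * x))
    ((∫ x in u..v, G x) / T), abs_sub_le (∫ x in u..v, F u (k * x)) ((v - u) / T * G u)
    ((∫ x in u..v, G x) / T)]

theorem abs_intervalIntegral_comp_mul_sub_average_le_of_partition (hF : Continuous F.uncurry)
    (hper : ∀ x, Function.Periodic (F x) T) (hT : 0 < T) (hlip : ∀ y, LipschitzWith L (F · y))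
    {a b : ℝ} (hab : a ≤ b) {m : ℕ} (hm : 0 < m) {k : ℝ} (hk : 0 < k) :
    |(∫ x in a..b, F x (k * x)) - (∫ x in a..b, ∫ t in 0..T, F x t) / T|
      ≤ 2 * L * (b - a) ^ 2 / m
        + (∑ j ∈ Finset.range m, 2 * ∫ t in 0..T, |F (a + j * ((b - a) / m)) t|) / k := by
  set h := (b - a) / m
  set p : ℕ → ℝ := fun j => a + j * h
  have hm' : (0 : ℝ) < m := Nat.cast_pos.2 hm
  have hh : 0 ≤ h := div_nonneg (sub_nonneg.2 hab) hm'.le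
  have hstep : ∀ j, p (j + 1) - p j = h := fun j => by simp only [p]; push_cast; ring
  have hsplit : ∀ f : ℝ → ℝ, Continuous f →
      ∫ x in a..b, f x = ∑ j ∈ Finset.range m, ∫ x in p j..p (j + 1), f x := fun f hf => by
    rw [intervalIntegral.sum_integral_adjacent_intervals fun _ _ => hf.intervalIntegrable _ _]
    congr 1
    · simp [p]
    · simp only [p, h]
      field_simp
      ring
  rw [hsplit _ (by fun_prop),
    hsplit _ (intervalIntegral.continuous_parametric_intervalIntegral_of_continuous' hF 0 T),
    Finset.sum_div, ← Finset.sum_sub_distrib]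
  calc _ ≤ ∑ j ∈ Finset.range m, (2 * L * h ^ 2 + 2 * (∫ t in 0..T, |F (p j) t|) / k) := by
        refine (Finset.abs_sum_le_sum_abs _ _).trans (Finset.sum_le_sum fun j _ => ?_)
        have := abs_intervalIntegral_comp_mul_sub_average_le hF hper hT hlip
          (u := p j) (v := p (j + 1)) (by linarith [hstep j]) hk
        rwa [hstep] at this
    _ = _ := by
        rw [Finset.sum_add_distrib, Finset.sum_const, Finset.card_range, nsmul_eq_mul,
          ← Finset.sum_div]
        simp only [h, p]
        field_simp

theorem tendsto_intervalIntegral_comp_mul_atTop (hF : Continuous F.uncurry)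
    (hper : ∀ x, Function.Periodic (F x) T) (hT : 0 < T) (hlip : ∀ y, LipschitzWith L (F · y))
    {a b : ℝ} (hab : a ≤ b) :
    Tendsto (fun k : ℕ => ∫ x in a..b, F x (k * x)) atTop
      (𝓝 ((∫ x in a..b, ∫ t in 0..T, F x t) / T)) := by
  refine Metric.tendsto_nhds.2 fun ε hε => ?_
  obtain ⟨m, hm⟩ := exists_nat_gt (4 * L * (b - a) ^ 2 / ε)
  have hm' : (0 : ℝ) < m := lt_of_le_of_lt (by positivity) hm
  have hfine : 2 * L * (b - a) ^ 2 / m < ε / 2 := by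
    rw [div_lt_iff₀ hε] at hm
    rw [div_lt_iff₀ hm']
    linarith
  filter_upwards [(tendsto_const_div_atTop_nhds_zero_nat
      (∑ j ∈ Finset.range m, 2 * ∫ t in 0..T, |F (a + j * ((b - a) / m)) t|)).eventually
      (gt_mem_nhds (half_pos hε)), eventually_gt_atTop 0] with k hk hk0
  rw [Real.dist_eq]
  calc _ ≤ _ := abs_intervalIntegral_comp_mul_sub_average_le_of_partition hF hper hT hlip hab
        (Nat.cast_pos.1 hm') (Nat.cast_pos.2 hk0)
    _ < ε / 2 + ε / 2 := add_lt_add hfine hk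
    _ = ε := add_halves ε

end Averaging

theorem integral_integral_abs_sub_of_antitoneOn {f : ℝ → ℝ} {a b : ℝ} (hab : a ≤ b)
    (hf : Continuous f) (hanti : AntitoneOn f (Set.Icc a b)) :
    ∫ x in a..b, ∫ t in a..b, |f x - f t| = 2 * ∫ x in a..b, (a + b - 2 * x) * f x := by
  set Φ := fun y => ∫ t in a..y, f t
  have hint : ∀ g : ℝ → ℝ, Continuous g → ∀ u v, IntervalIntegrable g volume u v :=
    fun g hg u v => hg.intervalIntegrable u v
  have hinner : ∀ x ∈ Set.uIcc a b,
      ∫ t in a..b, |f x - f t| = 2 * Φ x - Φ b + (a + b - 2 * x) * f x := by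
    intro x hx
    rw [Set.uIcc_of_le hab] at hx
    have hleft : ∫ t in a..x, |f x - f t| = Φ x - (x - a) * f x := by
      rw [intervalIntegral.integral_congr (g := fun t => f t - f x) fun t ht => ?_,
        intervalIntegral.integral_sub (hint f hf _ _) intervalIntegrable_const,
        intervalIntegral.integral_const, smul_eq_mul]
      rw [Set.uIcc_of_le hx.1] at ht
      have := hanti ⟨ht.1, ht.2.trans hx.2⟩ hx ht.2
      simp only [abs_of_nonpos (sub_nonpos.2 this), neg_sub]
    have hright : ∫ t in x..b, |f x - f t| = (b - x) * f x - (Φ b - Φ x) := by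
      rw [intervalIntegral.integral_congr (g := fun t => f x - f t) fun t ht => ?_,
        intervalIntegral.integral_sub intervalIntegrable_const (hint f hf _ _),
        intervalIntegral.integral_const, smul_eq_mul,
        intervalIntegral.integral_interval_sub_left (hint f hf _ _) (hint f hf _ _)]
      rw [Set.uIcc_of_le hx.2] at ht
      have := hanti hx ⟨hx.1.trans ht.1, ht.2⟩ ht.1
      simp only [abs_of_nonneg (sub_nonneg.2 this)]
    rw [← intervalIntegral.integral_add_adjacent_intervals (hint _ (by fun_prop) a x)
      (hint _ (by fun_prop) x b), hleft, hright]
    ring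
  have hparts : ∫ x in a..b, Φ x = ∫ x in a..b, (b - x) * f x := by
    have := intervalIntegral.integral_mul_deriv_eq_deriv_mul (a := a) (b := b) (u := Φ) (u' := f)
      (v := fun x => x - b) (v' := fun _ => 1)
      (fun x _ => (hf.integral_hasStrictDerivAt a x).hasDerivAt)
      (fun x _ => (hasDerivAt_id x).sub_const b) (hint f hf _ _) intervalIntegrable_const
    simp only [mul_one, sub_self, mul_zero, Φ, intervalIntegral.integral_same, zero_mul,
      zero_sub] at this
    rw [this, ← intervalIntegral.integral_neg]
    congr 1
    ext x
    ring
  have hweights : 2 * (∫ x in a..b, (b - x) * f x) - (b - a) * Φ b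
      = ∫ x in a..b, (a + b - 2 * x) * f x := by
    rw [← intervalIntegral.integral_const_mul, ← intervalIntegral.integral_const_mul,
      ← intervalIntegral.integral_sub (hint _ (by fun_prop) _ _) (hint _ (by fun_prop) _ _)]
    congr 1
    ext x
    ring
  rw [intervalIntegral.integral_congr hinner,
    intervalIntegral.integral_add (hint _ (by fun_prop) _ _) (hint _ (by fun_prop) _ _),
    intervalIntegral.integral_sub (hint _ (by fun_prop) _ _) intervalIntegrable_const,
    intervalIntegral.integral_const_mul, intervalIntegral.integral_const, smul_eq_mul, hparts,
    ← hweights]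
  ring

theorem two_mul_cos_pow (n : ℕ) (x : ℝ) :
    (2 * cos x) ^ n = ∑ j ∈ Finset.range (n + 1), (n.choose j : ℝ) * cos ((n - 2 * j : ℝ) * x) := by
  have hexp :
      ((2 * cos x : ℝ) : ℂ) = Complex.exp (-x * Complex.I) + Complex.exp (x * Complex.I) := by
    push_cast
    rw [Complex.two_cos, add_comm]
  have hterm : ∀ j ∈ Finset.range (n + 1),
      Complex.exp (-x * Complex.I) ^ j * Complex.exp (x * Complex.I) ^ (n - j) * (n.choose j : ℂ)
        = (n.choose j : ℂ) * Complex.exp (((n - 2 * j : ℝ) * x : ℝ) * Complex.I) := by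
    intro j hj
    rw [← Complex.exp_nat_mul, ← Complex.exp_nat_mul, ← Complex.exp_add,
      Nat.cast_sub (Finset.mem_range_succ_iff.1 hj), mul_comm]
    congr 2
    push_cast
    ring
  have h := congrArg (fun z => (z ^ n).re) hexp
  simp only [← Complex.ofReal_pow, Complex.ofReal_re] at h
  rw [h, add_pow, Finset.sum_congr rfl hterm, Complex.re_sum]
  simp only [Complex.mul_re, Complex.natCast_re, Complex.natCast_im, Complex.exp_ofReal_mul_I_re,
    zero_mul, sub_zero]

theorem integral_pi_sub_two_mul_mul_cos_of_odd {m : ℤ} (hm : Odd m) :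
    ∫ x in 0..π, (π - 2 * x) * cos (m * x) = 4 / m ^ 2 := by
  have hm0 : (m : ℝ) ≠ 0 := Int.cast_ne_zero.2 (by rintro rfl; simp at hm)
  have hderiv : ∀ x, HasDerivAt (fun x => (π - 2 * x) * sin (m * x) / m - 2 * cos (m * x) / m ^ 2)
      ((π - 2 * x) * cos (m * x)) x := by
    intro x
    have hlin : HasDerivAt (fun x : ℝ => m * x) m x := by
      simpa using (hasDerivAt_id x).const_mul (m : ℝ)
    have := (((((hasDerivAt_id x).const_mul 2).const_sub π).mul
      ((hasDerivAt_sin _).comp x hlin)).div_const (m : ℝ)).sub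
      ((((hasDerivAt_cos _).comp x hlin).const_mul 2).div_const ((m : ℝ) ^ 2))
    refine this.congr_deriv ?_
    simp only [Function.comp_apply, id]
    field_simp
    ring
  obtain ⟨k, rfl⟩ := hm
  have hsin : sin (((2 * k + 1 : ℤ) : ℝ) * π) = 0 := sin_int_mul_pi _
  have hcos : cos (((2 * k + 1 : ℤ) : ℝ) * π) = -1 := by
    rw [← cos_int_mul_two_pi_add_pi k]
    push_cast
    ring_nf
  rw [intervalIntegral.integral_eq_sub_of_hasDerivAt (fun x _ => hderiv x)
    (by apply Continuous.intervalIntegrable; fun_prop), hsin, hcos]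
  simp only [mul_zero, sin_zero, cos_zero]
  field_simp
  ring

theorem integral_pi_sub_two_mul_mul_cos_pow_of_odd {n : ℕ} (hn : Odd n) :
    ∫ x in 0..π, (π - 2 * x) * cos x ^ n
      = 4 / 2 ^ n * ∑ j ∈ Finset.range (n + 1), (n.choose j : ℝ) / ((n : ℝ) - 2 * j) ^ 2 := by
  have hexpand : ∀ x, (π - 2 * x) * cos x ^ n = ∑ j ∈ Finset.range (n + 1),
      (n.choose j : ℝ) / 2 ^ n * ((π - 2 * x) * cos (((n - 2 * j : ℤ) : ℝ) * x)) := by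
    intro x
    rw [show cos x ^ n = (2 * cos x) ^ n / 2 ^ n by rw [mul_pow]; field_simp, two_mul_cos_pow,
      Finset.sum_div, Finset.mul_sum]
    refine Finset.sum_congr rfl fun j _ => ?_
    push_cast
    ring
  simp_rw [hexpand]
  rw [intervalIntegral.integral_finsetSum fun j _ => by
    apply Continuous.intervalIntegrable; fun_prop, Finset.mul_sum]
  refine Finset.sum_congr rfl fun j _ => ?_
  rw [intervalIntegral.integral_const_mul, integral_pi_sub_two_mul_mul_cos_of_odd
    (((Int.odd_coe_nat n).2 hn).sub_even (even_two_mul _))]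
  push_cast
  ring

theorem Finset.sum_range_succ_eq_two_nsmul_of_odd {M : Type*} [AddCommMonoid M] {n : ℕ}
    (hn : Odd n) (f : ℕ → M) (hf : ∀ j ≤ n, f (n - j) = f j) :
    ∑ j ∈ Finset.range (n + 1), f j = 2 • ∑ j ∈ Finset.range ((n - 1) / 2 + 1), f j := by
  obtain ⟨r, rfl⟩ := hn
  rw [show (2 * r + 1 - 1) / 2 = r by omega, show 2 * r + 1 + 1 = (r + 1) + (r + 1) by ring,
    Finset.sum_range_add, two_nsmul, ← Finset.sum_range_reflect f (r + 1)]
  congr 1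
  refine Finset.sum_congr rfl fun j hj => ?_
  rw [Finset.mem_range] at hj
  rw [← hf (r + 1 + j) (by omega)]
  congr 1
  omega

theorem integral_comp_cos_zero_two_pi {g : ℝ → ℝ} (hg : Continuous g) :
    ∫ t in 0..2 * π, g (cos t) = 2 * ∫ t in 0..π, g (cos t) := by
  have hint : ∀ a b, IntervalIntegrable (fun t => g (cos t)) volume a b := fun a b => by
    apply Continuous.intervalIntegrable; fun_prop
  have hreflect : ∫ t in π..2 * π, g (cos t) = ∫ t in 0..π, g (cos t) := by
    simpa [cos_two_pi_sub, show 2 * π - π = π by ring] using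
      (intervalIntegral.integral_comp_sub_left (fun t => g (cos t)) (2 * π) (a := 0) (b := π)).symm
  rw [← intervalIntegral.integral_add_adjacent_intervals (hint 0 π) (hint π (2 * π)), hreflect,
    two_mul]

theorem lipschitzWith_cos_pow (n : ℕ) : LipschitzWith n fun x => cos x ^ n :=
  LipschitzWith.of_dist_le_mul fun x y => by
    simp only [Real.dist_eq, NNReal.coe_natCast]
    calc |cos x ^ n - cos y ^ n| ≤ |cos x - cos y| * n * max |cos x| |cos y| ^ (n - 1) :=
          abs_pow_sub_pow_le _ _ _
      _ ≤ |x - y| * n * 1 :=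
          mul_le_mul (mul_le_mul_of_nonneg_right (abs_cos_sub_cos_le x y) n.cast_nonneg)
            (pow_le_one₀ (le_max_of_le_left (abs_nonneg _))
              (max_le (abs_cos_le_one x) (abs_cos_le_one y))) (by positivity) (by positivity)
      _ = n * |x - y| := by ring

theorem LipschitzWith.abs_sub_const {α : Type*} [PseudoMetricSpace α] {K : ℝ≥0} {f : α → ℝ}
    (hf : LipschitzWith K f) (c : ℝ) : LipschitzWith K fun x => |f x - c| :=
  LipschitzWith.of_dist_le_mul fun x y => by
    rw [Real.dist_eq]
    calc _ ≤ |(f x - c) - (f y - c)| := abs_abs_sub_abs_le_abs_sub _ _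
      _ = dist (f x) (f y) := by rw [sub_sub_sub_cancel_right, Real.dist_eq]
      _ ≤ K * dist x y := hf.dist_le_mul x y

theorem area_odd_power_general (n : ℕ) (hn : Odd n) :
    Tendsto (fun k : ℕ => ∫ x in (0:ℝ)..π, |Real.cos x ^ n - Real.cos (k * x) ^ n|)
      atTop
      (𝓝 (8 / (2 ^ (n - 1) * π) *
        ∑ j ∈ Finset.range ((n - 1) / 2 + 1),
          (n.choose j : ℝ) / ((n : ℝ) - 2 * (j : ℝ)) ^ 2)) := by
  have hanti : AntitoneOn (fun x => cos x ^ n) (Set.Icc 0 π) := fun x hx y hy hxy =>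
    hn.strictMono_pow.monotone (cos_le_cos_of_nonneg_of_le_pi hx.1 hy.2 hxy)
  have hhalf : ∀ x, ∫ t in 0..2 * π, |cos x ^ n - cos t ^ n|
      = 2 * ∫ t in 0..π, |cos x ^ n - cos t ^ n| := fun x =>
    integral_comp_cos_zero_two_pi (g := fun c => |cos x ^ n - c ^ n|) (by fun_prop)
  have hfold := Finset.sum_range_succ_eq_two_nsmul_of_odd hn
    (fun j => (n.choose j : ℝ) / ((n : ℝ) - 2 * j) ^ 2) fun j hj => by
      rw [Nat.choose_symm hj, Nat.cast_sub hj]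
      ring
  convert tendsto_intervalIntegral_comp_mul_atTop (F := fun x y => |cos x ^ n - cos y ^ n|)
    (by fun_prop) (fun x y => by simp) two_pi_pos
    (fun y => (lipschitzWith_cos_pow n).abs_sub_const _) pi_pos.le using 2
  simp_rw [hhalf, intervalIntegral.integral_const_mul]
  rw [integral_integral_abs_sub_of_antitoneOn pi_pos.le (by fun_prop) hanti, zero_add,
    integral_pi_sub_two_mul_mul_cos_pow_of_odd hn, hfold, nsmul_eq_mul,
    show (2 : ℝ) ^ n = 2 ^ (n - 1) * 2 by rw [← pow_succ, Nat.sub_add_cancel hn.pos]]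
  field_simp
  ring

theorem area_odd_power (n : ℕ) (hn : Odd n) (hpos : 0 < n) :
    Tendsto (fun k : ℕ => ∫ x in (0:ℝ)..π, |Real.cos x ^ n - Real.cos (k * x) ^ n|)
      atTop
      (𝓝 (8 / (2 ^ (n - 1) * π) *
        ∑ j ∈ Finset.range ((n - 1) / 2 + 1),
          (n.choose j : ℝ) / ((n : ℝ) - 2 * (j : ℝ)) ^ 2)) :=
  area_odd_power_general n hn
end

section
/- For every real number x with |x| < 1, one has arcsin(x)²/(2(1−x)) = Σ_{n=0}^∞ c_n xⁿ, where c_n = Σ_{j ≥ 0, 2j+2 ≤ n} ((2j)!!)²/(2j+2)! (an empty sum being 0). In particular, for even n ≥ 2 the coefficient of xⁿ in the exponential generating function of arcsin(x)²/(2(1−x)) is n! · Σ_{j=0}^{(n−2)/2} ((2j)!!/(2j+1)!!) · (1/(2j+2)). -/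
/-!
With `b_j = (2j)!!/(2j+1)!!`, the series `U(x) = ∑ b_j x^(2j+1)` satisfies
`(1 - x²) U' - x U = 1`, because `b_{j+1} (2j+3) = b_j (2j+2)` makes the series telescope; hence
`U √(1 - x²)` and `arcsin` have the same derivative and `U = arcsin x / √(1 - x²)`. Since
`(2j)!!² / (2j+2)! = b_j / (2j+2)`, the series `∑ (2j)!!²/(2j+2)! x^(2j+2)` is the primitive of `U`
vanishing at `0`, namely `arcsin² / 2`. Dividing a power series by `1 - x` replaces its coefficients
by their partial sums, which gives the coefficients `c_n`.
-/

open Real Finset Function Nat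

theorem Nat.doubleFactorial_two_mul_le (j : ℕ) : (2 * j)‼ ≤ (2 * j + 1)‼ := by
  induction j with
  | zero => rfl
  | succ j ih =>
    rw [show 2 * (j + 1) = 2 * j + 2 by ring, show 2 * j + 2 + 1 = 2 * j + 1 + 2 by ring,
      Nat.doubleFactorial_add_two, Nat.doubleFactorial_add_two]
    exact Nat.mul_le_mul (by omega) ih

noncomputable def wallisRatio (j : ℕ) : ℝ := ((2 * j)‼ : ℝ) / ((2 * j + 1)‼ : ℝ)

noncomputable def arcsinSqCoeff (j : ℕ) : ℝ := ((2 * j)‼ : ℝ) ^ 2 / ((2 * j + 2)! : ℝ)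

lemma wallisRatio_zero : wallisRatio 0 = 1 := by simp [wallisRatio]

lemma wallisRatio_nonneg (j : ℕ) : 0 ≤ wallisRatio j := by unfold wallisRatio; positivity

lemma wallisRatio_le_one (j : ℕ) : wallisRatio j ≤ 1 :=
  div_le_one_of_le₀ (mod_cast Nat.doubleFactorial_two_mul_le j) (Nat.cast_nonneg _)

lemma abs_wallisRatio_le_one (j : ℕ) : |wallisRatio j| ≤ 1 := by
  rw [abs_of_nonneg (wallisRatio_nonneg j)]; exact wallisRatio_le_one j

lemma wallisRatio_succ_mul (j : ℕ) :
    wallisRatio (j + 1) * (2 * j + 3) = wallisRatio j * (2 * j + 2) := by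
  have h : ((2 * j + 1)‼ : ℝ) ≠ 0 := by positivity
  rw [wallisRatio, wallisRatio, show 2 * (j + 1) = 2 * j + 2 by ring,
    show 2 * j + 2 + 1 = 2 * j + 1 + 2 by ring, Nat.doubleFactorial_add_two,
    Nat.doubleFactorial_add_two]
  push_cast
  field_simp
  ring

lemma arcsinSqCoeff_eq_wallisRatio_div (j : ℕ) : arcsinSqCoeff j = wallisRatio j / (2 * j + 2) := by
  have h : ((2 * j + 2)! : ℝ) = (2 * j + 2) * (2 * j)‼ * (2 * j + 1)‼ := by
    rw [Nat.factorial_eq_mul_doubleFactorial, Nat.doubleFactorial_add_two]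
    push_cast
    ring
  have h1 : ((2 * j)‼ : ℝ) ≠ 0 := by positivity
  have h2 : ((2 * j + 1)‼ : ℝ) ≠ 0 := by positivity
  rw [arcsinSqCoeff, wallisRatio, h]
  field_simp

lemma abs_arcsinSqCoeff_le_one (j : ℕ) : |arcsinSqCoeff j| ≤ 1 := by
  rw [arcsinSqCoeff_eq_wallisRatio_div, abs_of_nonneg (by have := wallisRatio_nonneg j; positivity)]
  exact div_le_one_of_le₀ (by linarith [wallisRatio_le_one j, (j.cast_nonneg : (0:ℝ) ≤ j)])
    (by positivity)

section

variable {c : ℕ → ℝ} {C : ℝ} {e : ℕ → ℕ} {x : ℝ}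

lemma summable_mul_pow_comp (hc : ∀ j, |c j| ≤ C) (he : Injective e) (hx : |x| < 1) :
    Summable fun j => c j * x ^ e j := by
  refine .of_norm_bounded
    (((summable_geometric_of_lt_one (abs_nonneg x) hx).comp_injective he).mul_left C) fun j => ?_
  rw [norm_mul, norm_pow, Real.norm_eq_abs, Real.norm_eq_abs]
  exact mul_le_mul_of_nonneg_right (hc j) (by positivity)

lemma summable_natCast_mul_pow_sub_one {r : ℝ} (hr : |r| < 1) :
    Summable fun n : ℕ => (n : ℝ) * r ^ (n - 1) := by
  rw [← summable_nat_add_iff 1]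
  have hr' : ‖r‖ < 1 := by rwa [Real.norm_eq_abs]
  refine ((summable_pow_mul_geometric_of_norm_lt_one 1 hr').add
    (summable_geometric_of_norm_lt_one hr')).congr fun n => ?_
  push_cast
  simp only [pow_one]
  ring

lemma norm_mul_natCast_mul_pow_sub_one_le {a y r : ℝ} (ha : |a| ≤ C) (hy : |y| ≤ r) (n : ℕ) :
    ‖a * n * y ^ (n - 1)‖ ≤ C * (n * r ^ (n - 1)) := by
  rw [norm_mul, norm_mul, norm_pow, Real.norm_eq_abs, Real.norm_eq_abs, Real.norm_eq_abs,
    Nat.abs_cast, mul_assoc]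
  exact mul_le_mul ha (by gcongr) (by positivity) ((abs_nonneg a).trans ha)

lemma summable_mul_natCast_mul_pow_sub_one_comp (hc : ∀ j, |c j| ≤ C) (he : Injective e)
    (hx : |x| < 1) : Summable fun j => c j * e j * x ^ (e j - 1) :=
  .of_norm_bounded
    (((summable_natCast_mul_pow_sub_one (by rwa [abs_abs])).comp_injective he).mul_left C)
    fun j => norm_mul_natCast_mul_pow_sub_one_le (hc j) le_rfl (e j)

lemma hasDerivAt_tsum_mul_pow_comp (hc : ∀ j, |c j| ≤ C) (he : Injective e) (hx : |x| < 1) :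
    HasDerivAt (fun y => ∑' j, c j * y ^ e j) (∑' j, c j * e j * x ^ (e j - 1)) x := by
  obtain ⟨r, hxr, hr1⟩ := exists_between hx
  have hr0 : 0 < r := (abs_nonneg x).trans_lt hxr
  have hr : |r| < 1 := by rwa [abs_of_pos hr0]
  refine hasDerivAt_tsum_of_isPreconnected (g := fun j y => c j * y ^ e j)
    (g' := fun j y => c j * e j * y ^ (e j - 1)) (u := fun j => C * (e j * r ^ (e j - 1)))
    (((summable_natCast_mul_pow_sub_one hr).comp_injective he).mul_left C)
    (Metric.isOpen_ball (x := (0 : ℝ))) (convex_ball 0 r).isPreconnected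
    (fun j y _ => ?_) (fun j y hy => ?_) (Metric.mem_ball_self hr0)
    (summable_mul_pow_comp hc he (by simp)) (by simpa using hxr)
  · simpa [mul_assoc] using (hasDerivAt_pow (e j) y).const_mul (c j)
  · exact norm_mul_natCast_mul_pow_sub_one_le (hc j) (by simpa using (Metric.mem_ball.1 hy).le) _

end

lemma eq_of_hasDerivAt_eq_of_abs_lt_one {f g f' : ℝ → ℝ}
    (hf : ∀ y, |y| < 1 → HasDerivAt f (f' y) y) (hg : ∀ y, |y| < 1 → HasDerivAt g (f' y) y)
    (h0 : f 0 = g 0) {x : ℝ} (hx : |x| < 1) : f x = g x := by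
  have hball : ∀ y ∈ Metric.ball (0 : ℝ) 1, |y| < 1 := fun y hy => by simpa using hy
  exact Metric.isOpen_ball.eqOn_of_deriv_eq (convex_ball (0 : ℝ) 1).isPreconnected
    (fun y hy => (hf y (hball y hy)).differentiableAt.differentiableWithinAt)
    (fun y hy => (hg y (hball y hy)).differentiableAt.differentiableWithinAt)
    (fun y hy => by rw [(hf y (hball y hy)).deriv, (hg y (hball y hy)).deriv])
    (Metric.mem_ball_self one_pos) h0 (by simpa using hx)

noncomputable def wallisSeries (x : ℝ) : ℝ := ∑' j, wallisRatio j * x ^ (2 * j + 1)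

noncomputable def arcsinSqSeries (x : ℝ) : ℝ := ∑' j, arcsinSqCoeff j * x ^ (2 * j + 2)

lemma injective_two_mul_add (m : ℕ) : Injective fun j : ℕ => 2 * j + m :=
  fun _ _ h => by simp only at h; omega

lemma hasDerivAt_wallisSeries {x : ℝ} (hx : |x| < 1) :
    HasDerivAt wallisSeries (∑' j, wallisRatio j * (2 * j + 1) * x ^ (2 * j)) x := by
  unfold wallisSeries
  simpa using hasDerivAt_tsum_mul_pow_comp abs_wallisRatio_le_one (injective_two_mul_add 1) hx

lemma hasDerivAt_arcsinSqSeries {x : ℝ} (hx : |x| < 1) :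
    HasDerivAt arcsinSqSeries (wallisSeries x) x := by
  unfold arcsinSqSeries wallisSeries
  convert hasDerivAt_tsum_mul_pow_comp abs_arcsinSqCoeff_le_one (injective_two_mul_add 2) hx
    using 2
  funext j
  rw [arcsinSqCoeff_eq_wallisRatio_div, show 2 * j + 2 - 1 = 2 * j + 1 by omega]
  push_cast
  field_simp

lemma one_sub_sq_mul_deriv_wallisSeries_sub {x : ℝ} (hx : |x| < 1) :
    (1 - x ^ 2) * (∑' j, wallisRatio j * (2 * j + 1) * x ^ (2 * j)) - x * wallisSeries x = 1 := by
  set T : ℕ → ℝ := fun j => wallisRatio j * (2 * j + 1) * x ^ (2 * j)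
  have hT : HasSum T (∑' j, T j) := by
    simpa [T] using (summable_mul_natCast_mul_pow_sub_one_comp abs_wallisRatio_le_one
      (injective_two_mul_add 1) hx).hasSum
  have hW : HasSum (fun j => wallisRatio j * x ^ (2 * j + 1)) (wallisSeries x) :=
    (summable_mul_pow_comp abs_wallisRatio_le_one (injective_two_mul_add 1) hx).hasSum
  have hshift : HasSum (fun j => T (j + 1)) (∑' j, T j - 1) := by
    simpa [T, wallisRatio_zero] using (hasSum_nat_add_iff' 1).2 hT
  have hsplit : (fun j => T (j + 1)) =
      fun j => x ^ 2 * T j + x * (wallisRatio j * x ^ (2 * j + 1)) := by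
    funext j
    simp only [T]
    push_cast
    rw [show 2 * (j + 1) = 2 * j + 2 by ring]
    linear_combination x ^ (2 * j + 2) * wallisRatio_succ_mul j
  rw [hsplit] at hshift
  linarith [hshift.unique ((hT.mul_left (x ^ 2)).add (hW.mul_left x))]

lemma wallisSeries_mul_sqrt_eq_arcsin {x : ℝ} (hx : |x| < 1) :
    wallisSeries x * √(1 - x ^ 2) = arcsin x := by
  refine eq_of_hasDerivAt_eq_of_abs_lt_one (f := fun y => wallisSeries y * √(1 - y ^ 2))
    (g := arcsin) (f' := fun y => 1 / √(1 - y ^ 2)) (fun y hy => ?_) (fun y hy => ?_)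
    (by simp [wallisSeries]) hx
  · obtain ⟨hy1, hy2⟩ := abs_lt.1 hy
    have hpos : 0 < 1 - y ^ 2 := by nlinarith
    have hsqrt : HasDerivAt (fun z => √(1 - z ^ 2)) (-(2 * y) / (2 * √(1 - y ^ 2))) y := by
      simpa using ((hasDerivAt_pow 2 y).const_sub 1).sqrt hpos.ne'
    refine ((hasDerivAt_wallisSeries hy).mul hsqrt).congr_deriv ?_
    have hs : √(1 - y ^ 2) ≠ 0 := (Real.sqrt_pos.2 hpos).ne'
    field_simp
    rw [Real.sq_sqrt hpos.le]
    linear_combination one_sub_sq_mul_deriv_wallisSeries_sub hy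
  · obtain ⟨hy1, hy2⟩ := abs_lt.1 hy
    simpa using hasDerivAt_arcsin (by linarith : y ≠ -1) (by linarith : y ≠ 1)

lemma arcsinSqSeries_eq_arcsin_sq_div_two {x : ℝ} (hx : |x| < 1) :
    arcsinSqSeries x = arcsin x ^ 2 / 2 := by
  refine eq_of_hasDerivAt_eq_of_abs_lt_one (g := fun y => arcsin y ^ 2 / 2) (f' := wallisSeries)
    (fun _ => hasDerivAt_arcsinSqSeries) (fun y hy => ?_) (by simp [arcsinSqSeries]) hx
  obtain ⟨hy1, hy2⟩ := abs_lt.1 hy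
  have hpos : 0 < √(1 - y ^ 2) := Real.sqrt_pos.2 (by nlinarith)
  refine (((hasDerivAt_arcsin (by linarith) (by linarith)).pow 2).div_const 2).congr_deriv ?_
  rw [eq_div_of_mul_eq hpos.ne' (wallisSeries_mul_sqrt_eq_arcsin hy)]
  norm_num
  field_simp

lemma hasSum_sum_range_mul_pow {A : ℕ → ℝ} {x s : ℝ} (hx : |x| < 1)
    (hA : Summable fun n => ‖A n * x ^ n‖) (hs : HasSum (fun n => A n * x ^ n) s) :
    HasSum (fun n => (∑ k ∈ range (n + 1), A k) * x ^ n) (s / (1 - x)) := by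
  have hgeom : Summable fun n => ‖x ^ n‖ := by
    simpa [norm_pow] using summable_geometric_of_lt_one (abs_nonneg x) hx
  have h := hasSum_sum_range_mul_of_summable_norm hA hgeom
  rw [hs.tsum_eq, tsum_geometric_of_abs_lt_one hx, ← div_eq_mul_inv] at h
  refine h.congr_fun fun n => ?_
  rw [sum_mul]
  refine sum_congr rfl fun k hk => ?_
  rw [mul_assoc, ← pow_add, Nat.add_sub_cancel' (Nat.lt_succ_iff.1 (mem_range.1 hk))]

lemma sum_range_succ_extend_two_mul_add_two {M : Type*} [AddCommMonoid M] (a : ℕ → M) (n : ℕ) :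
    ∑ k ∈ range (n + 1), extend (fun j => 2 * j + 2) a 0 k =
      ∑ j ∈ range n, if 2 * j + 2 ≤ n then a j else 0 := by
  have he := injective_two_mul_add 2
  rw [← sum_preimage _ _ he.injOn _ fun k _ hk => extend_apply' (f := fun j => 2 * j + 2) a 0 k hk]
  rw [← sum_filter]
  refine sum_congr (by ext j; simp; omega) fun j _ => he.extend_apply _ _ _

lemma sum_range_ite_two_mul_add_two_le {M : Type*} [AddCommMonoid M] (a : ℕ → M) {n : ℕ}
    (hn : 2 ≤ n) :
    ∑ j ∈ range n, (if 2 * j + 2 ≤ n then a j else 0) = ∑ j ∈ range ((n - 2) / 2 + 1), a j := by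
  rw [← sum_filter]
  exact sum_congr (by ext j; simp; omega) fun _ _ => rfl

lemma hasSum_arcsin_sq_div_two_mul_one_sub {x : ℝ} (hx : |x| < 1) :
    HasSum (fun n => (∑ j ∈ range n, if 2 * j + 2 ≤ n then arcsinSqCoeff j else 0) * x ^ n)
      (arcsin x ^ 2 / (2 * (1 - x))) := by
  set A := extend (fun j => 2 * j + 2) arcsinSqCoeff 0
  have he := injective_two_mul_add 2
  have hvanish (n : ℕ) (hn : n ∉ Set.range fun j => 2 * j + 2) : A n = 0 :=
    extend_apply' _ _ _ hn
  have hsumm := summable_mul_pow_comp abs_arcsinSqCoeff_le_one he hx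
  have hA : HasSum (fun n => A n * x ^ n) (arcsin x ^ 2 / 2) := by
    rw [← he.hasSum_iff fun n hn => by rw [hvanish n hn, zero_mul],
      ← arcsinSqSeries_eq_arcsin_sq_div_two hx]
    simpa [A, comp_def, he.extend_apply, arcsinSqSeries] using hsumm.hasSum
  have hAnorm : Summable fun n => ‖A n * x ^ n‖ := by
    rw [← he.summable_iff fun n hn => by rw [hvanish n hn, zero_mul, norm_zero]]
    simpa [A, comp_def, he.extend_apply] using hsumm.norm
  simpa only [A, div_div, sum_range_succ_extend_two_mul_add_two] using
    hasSum_sum_range_mul_pow hx hAnorm hA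

theorem arcsin_sq_egf_A372324 :
    (∀ x : ℝ, |x| < 1 →
      HasSum (fun n : ℕ =>
        (∑ j ∈ Finset.range n, if 2 * j + 2 ≤ n then
            (Nat.doubleFactorial (2 * j) : ℝ) ^ 2 / (Nat.factorial (2 * j + 2) : ℝ)
          else 0) * x ^ n)
        (Real.arcsin x ^ 2 / (2 * (1 - x)))) ∧
    (∀ n : ℕ, Even n → 2 ≤ n →
      (n.factorial : ℝ) *
          (∑ j ∈ Finset.range n, if 2 * j + 2 ≤ n then
              (Nat.doubleFactorial (2 * j) : ℝ) ^ 2 / (Nat.factorial (2 * j + 2) : ℝ)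
            else 0) =
        (n.factorial : ℝ) *
          ∑ j ∈ Finset.range ((n - 2) / 2 + 1),
            (Nat.doubleFactorial (2 * j) : ℝ) / (Nat.doubleFactorial (2 * j + 1) : ℝ) *
              (1 / (2 * (j : ℝ) + 2))) := by
  refine ⟨fun x hx => hasSum_arcsin_sq_div_two_mul_one_sub hx, fun n _ hn => congrArg _ ?_⟩
  refine (sum_range_ite_two_mul_add_two_le arcsinSqCoeff hn).trans (sum_congr rfl fun j _ => ?_)
  rw [arcsinSqCoeff_eq_wallisRatio_div, wallisRatio, mul_one_div]
end

section
/- Let q be an odd positive integer. Then, as m tends to infinity over the positive integers (so that k = 2m+1 runs over the odd integers), the sums Σ_{ℓ=1}^{m} ∫_{ℓ·2π/(2m+2)}^{ℓ·2π/(2m)} (cos(q(2m+1)x) − cos(qx)) dx converge to 4/(q²·π). -/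
open Real Filter MeasureTheory Topology

/-!
With `v = π q / (2m)` and `w = π q / (2m + 2)`, the endpoints of the `ℓ`-th interval are `2ℓv / q`
and `2ℓw / q`, and multiplying them by `q (2m + 1)` gives `2ℓv` and `-2ℓw` modulo `2π`. So the
`ℓ`-th integral is a combination of `sin (2ℓv)` and `sin (2ℓw)`, and for odd `q` the sums over `ℓ`
telescope to `cot v` and `cot w`. Replacing `cot x` by `1 / x` yields exactly `4 / (q² π)` for
every `m`; the error terms are `cot x - 1 / x = O(x)` times bounded coefficients.
-/

lemma abs_mul_cos_sub_sin_le (x : ℝ) : |x * cos x - sin x| ≤ 2 / 3 * |x| ^ 3 := by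
  have hcos : |cos x - 1| ≤ x ^ 2 / 2 := by
    rw [abs_sub_comm, abs_of_nonneg (by linarith [cos_le_one x])]
    linarith [one_sub_sq_div_two_le_cos (x := x)]
  calc |x * cos x - sin x| = |x * (cos x - 1) + (x - sin x)| := by ring_nf
    _ ≤ |x| * (x ^ 2 / 2) + |x| ^ 3 / 6 := by
        grw [abs_add_le, abs_mul, hcos, abs_sub_sin_le]
    _ = 2 / 3 * |x| ^ 3 := by rw [← sq_abs x]; ring

lemma tendsto_cot_sub_inv : Tendsto (fun x => cot x - x⁻¹) (𝓝[≠] 0) (𝓝 0) := by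
  have hnum : Tendsto (fun x => (x * cos x - sin x) / x ^ 2) (𝓝[≠] 0) (𝓝 0) := by
    have hbound : Tendsto (fun x : ℝ => 2 / 3 * |x|) (𝓝[≠] 0) (𝓝 0) := by
      simpa using ((continuous_abs.tendsto (0 : ℝ)).const_mul (2 / 3)).mono_left nhdsWithin_le_nhds
    refine squeeze_zero_norm' ?_ hbound
    filter_upwards [self_mem_nhdsWithin] with x (hx : x ≠ 0)
    rw [norm_div, norm_pow, Real.norm_eq_abs, Real.norm_eq_abs, div_le_iff₀ (by positivity)]
    calc _ ≤ 2 / 3 * |x| ^ 3 := abs_mul_cos_sub_sin_le x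
      _ = _ := by ring
  have hsinc : Tendsto (fun x => (sinc x)⁻¹) (𝓝[≠] 0) (𝓝 1) := by
    simpa using ((continuous_sinc.tendsto 0).inv₀ (by simp)).mono_left nhdsWithin_le_nhds
  have hsinc_ne : ∀ᶠ x in 𝓝[≠] (0 : ℝ), sinc x ≠ 0 :=
    ((continuous_sinc.tendsto 0).eventually_ne (by simp)).filter_mono nhdsWithin_le_nhds
  simpa using (hnum.mul hsinc).congr' <| by
    filter_upwards [self_mem_nhdsWithin, hsinc_ne] with x (hx : x ≠ 0) hs
    rw [sinc_of_ne_zero hx] at hs ⊢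
    have : sin x ≠ 0 := by rintro h; simp [h] at hs
    rw [cot_eq_cos_div_sin]
    field_simp

lemma integral_cos_mul {c : ℝ} (hc : c ≠ 0) (a b : ℝ) :
    ∫ x in a..b, cos (c * x) = (sin (c * b) - sin (c * a)) / c := by
  simp [intervalIntegral.integral_comp_mul_left _ hc, div_eq_inv_mul]

lemma tendsto_div_mul_natCast_add_nhdsNE {c : ℝ} (hc : c ≠ 0) {a : ℝ} (ha : 0 < a) (b : ℝ) :
    Tendsto (fun m : ℕ => c / (a * m + b)) atTop (𝓝[≠] 0) := by
  have hden : Tendsto (fun m : ℕ => a * m + b) atTop atTop :=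
    tendsto_atTop_add_const_right _ b (tendsto_natCast_atTop_atTop.const_mul_atTop ha)
  refine tendsto_nhdsWithin_iff.mpr ⟨tendsto_const_nhds.div_atTop hden, ?_⟩
  filter_upwards [hden.eventually_gt_atTop 0] with m hm
  exact div_ne_zero hc hm.ne'

lemma two_mul_sin_mul_sum_sin (v : ℝ) (m : ℕ) :
    2 * sin v * ∑ ℓ ∈ Finset.Icc 1 m, sin (ℓ * (2 * v)) = cos v - cos ((2 * m + 1) * v) := by
  induction m with
  | zero => simp
  | succ n ih =>
    rw [Finset.sum_Icc_succ_top (by omega), mul_add, ih, two_mul_sin_mul_sin]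
    push_cast
    rw [show v - (n + 1) * (2 * v) = -((2 * n + 1) * v) by ring, cos_neg]
    ring_nf

lemma sum_sin_two_mul_eq_cot {v : ℝ} (hv : sin v ≠ 0) {m : ℕ}
    (h : cos ((2 * m + 1) * v) = -cos v) :
    ∑ ℓ ∈ Finset.Icc 1 m, sin (ℓ * (2 * v)) = cot v := by
  have := two_mul_sin_mul_sum_sin v m
  rw [h] at this
  rw [cot_eq_cos_div_sin, eq_div_iff hv]
  linarith

lemma cos_odd_mul_pi_add {q : ℕ} (hq : Odd q) (x : ℝ) : cos (q * π + x) = -cos x := by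
  rw [add_comm, cos_add_nat_mul_pi, hq.neg_one_pow, neg_one_mul]

lemma cos_odd_mul_pi_sub {q : ℕ} (hq : Odd q) (x : ℝ) : cos (q * π - x) = -cos x := by
  rw [cos_nat_mul_pi_sub, hq.neg_one_pow, neg_one_mul]

lemma sin_pi_mul_div_pos {a b : ℝ} (ha : 0 < a) (hab : a < b) : 0 < sin (π * a / b) := by
  have hb := ha.trans hab
  apply sin_pos_of_pos_of_lt_pi (by positivity)
  rw [div_lt_iff₀ hb]
  nlinarith [pi_pos]

lemma integral_cos_sub_cos_eq {q : ℕ} (hq : q ≠ 0) {m : ℕ} (hm : m ≠ 0) (ℓ : ℕ) :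
    ∫ x in (ℓ : ℝ) * 2 * π / (2 * m + 2)..(ℓ : ℝ) * 2 * π / (2 * m),
        (cos (q * (2 * m + 1) * x) - cos (q * x))
      = sin (ℓ * (2 * (π * q / (2 * m)))) * (1 / (q * (2 * m + 1)) - 1 / q)
        + sin (ℓ * (2 * (π * q / (2 * m + 2)))) * (1 / (q * (2 * m + 1)) + 1 / q) := by
  have hk : (q : ℝ) * (2 * m + 1) ≠ 0 := by positivity
  rw [intervalIntegral.integral_sub
      ((by fun_prop : Continuous _).intervalIntegrable _ _)
      ((by fun_prop : Continuous _).intervalIntegrable _ _), integral_cos_mul hk,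
    integral_cos_mul (by positivity)]
  have hm' : (m : ℝ) ≠ 0 := by positivity
  have hm2 : (2 * m + 2 : ℝ) ≠ 0 := by positivity
  rw [show (q : ℝ) * (2 * m + 1) * (ℓ * 2 * π / (2 * m))
      = ℓ * (2 * (π * q / (2 * m))) + (ℓ * q : ℕ) * (2 * π) by push_cast; field_simp; ring,
    show (q : ℝ) * (2 * m + 1) * (ℓ * 2 * π / (2 * m + 2))
      = (ℓ * q : ℕ) * (2 * π) - ℓ * (2 * (π * q / (2 * m + 2))) by push_cast; field_simp; ring,
    sin_add_nat_mul_two_pi, sin_nat_mul_two_pi_sub]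
  field_simp
  ring

lemma sum_integral_cos_sub_cos_eq {q : ℕ} (hq : Odd q) {m : ℕ} (hqm : q < 2 * m) :
    ∑ ℓ ∈ Finset.Icc 1 m, ∫ x in (ℓ : ℝ) * 2 * π / (2 * m + 2)..(ℓ : ℝ) * 2 * π / (2 * m),
        (cos (q * (2 * m + 1) * x) - cos (q * x))
      = 4 / (q ^ 2 * π)
        + (cot (π * q / (2 * m)) - (π * q / (2 * m))⁻¹) * (1 / (q * (2 * m + 1)) - 1 / q)
        + (cot (π * q / (2 * m + 2)) - (π * q / (2 * m + 2))⁻¹)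
          * (1 / (q * (2 * m + 1)) + 1 / q) := by
  have hq0 : q ≠ 0 := hq.pos.ne'
  have hm : m ≠ 0 := by omega
  have hqm' : (q : ℝ) < 2 * m := by exact_mod_cast hqm
  have hsum_v : ∑ ℓ ∈ Finset.Icc 1 m, sin (ℓ * (2 * (π * q / (2 * m)))) = cot (π * q / (2 * m)) :=
    sum_sin_two_mul_eq_cot (sin_pi_mul_div_pos (by positivity) hqm').ne' <| by
      rw [show (2 * m + 1) * (π * q / (2 * m)) = q * π + π * q / (2 * m) by field_simp,
        cos_odd_mul_pi_add hq]
  have hsum_w : ∑ ℓ ∈ Finset.Icc 1 m, sin (ℓ * (2 * (π * q / (2 * m + 2))))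
      = cot (π * q / (2 * m + 2)) :=
    sum_sin_two_mul_eq_cot (sin_pi_mul_div_pos (by positivity) (by linarith)).ne' <| by
      rw [show (2 * m + 1) * (π * q / (2 * m + 2)) = q * π - π * q / (2 * m + 2) by
        field_simp; ring, cos_odd_mul_pi_sub hq]
  have hmain : (π * q / (2 * m))⁻¹ * (1 / (q * (2 * m + 1)) - 1 / q)
      + (π * q / (2 * m + 2))⁻¹ * (1 / (q * (2 * m + 1)) + 1 / q) = 4 / (q ^ 2 * π) := by
    field_simp
    ring
  rw [Finset.sum_congr rfl fun ℓ _ => integral_cos_sub_cos_eq hq0 hm ℓ, Finset.sum_add_distrib,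
    ← Finset.sum_mul, ← Finset.sum_mul, hsum_v, hsum_w]
  linear_combination hmain

theorem trig_integral_odd_odd_general (q : ℕ) (hq : Odd q) :
    Tendsto (fun m : ℕ =>
      ∑ ℓ ∈ Finset.Icc 1 m,
        ∫ x in ((ℓ : ℝ) * 2 * π / (2 * (m : ℝ) + 2))..((ℓ : ℝ) * 2 * π / (2 * (m : ℝ))),
          (Real.cos ((q : ℝ) * (2 * (m : ℝ) + 1) * x) - Real.cos ((q : ℝ) * x)))
      atTop (𝓝 (4 / ((q : ℝ) ^ 2 * π))) := by
  have hq_pos : (0 : ℝ) < q := by exact_mod_cast hq.pos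
  have hv := tendsto_cot_sub_inv.comp <|
    tendsto_div_mul_natCast_add_nhdsNE (c := π * q) (by positivity) two_pos 0
  have hw := tendsto_cot_sub_inv.comp <|
    tendsto_div_mul_natCast_add_nhdsNE (c := π * q) (by positivity) two_pos 2
  have hk : Tendsto (fun m : ℕ => 1 / ((q : ℝ) * (2 * m + 1))) atTop (𝓝 0) :=
    ((tendsto_div_mul_natCast_add_nhdsNE one_ne_zero (by positivity : (0 : ℝ) < 2 * q) q).mono_right
      nhdsWithin_le_nhds).congr fun m => by ring_nf
  have hlim := ((tendsto_const_nhds (x := 4 / ((q : ℝ) ^ 2 * π))).add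
    (hv.mul (hk.sub_const (1 / (q : ℝ))))).add (hw.mul (hk.add_const (1 / (q : ℝ))))
  simp only [zero_mul, add_zero] at hlim
  refine hlim.congr' ?_
  filter_upwards [eventually_gt_atTop q] with m hm
  exact (sum_integral_cos_sub_cos_eq hq (by omega)).symm

theorem trig_integral_odd_odd (q : ℕ) (hq : Odd q) (hpos : 0 < q) :
    Tendsto (fun m : ℕ =>
      ∑ ℓ ∈ Finset.Icc 1 m,
        ∫ x in ((ℓ : ℝ) * 2 * π / (2 * (m : ℝ) + 2))..((ℓ : ℝ) * 2 * π / (2 * (m : ℝ))),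
          (Real.cos ((q : ℝ) * (2 * (m : ℝ) + 1) * x) - Real.cos ((q : ℝ) * x)))
      atTop (𝓝 (4 / ((q : ℝ) ^ 2 * π))) :=
  trig_integral_odd_odd_general q hq
end

section
/- Let q be an even positive integer, and for odd k = 2m+1 set f_{q,k}(x) = cos(qx) − cos(qkx) and S(k) = Σ_{ℓ=1}^{(k−1)/2} ( ∫_{(ℓ−1)π/(k−1)}^{ℓπ/(k+1)} f_{q,k}(x) dx − ∫_{ℓπ/(k+1)}^{ℓπ/(k−1)} f_{q,k}(x) dx ). Then, as m → ∞ over the positive integers, S(2m+1) converges to 0 if q ≡ 0 (mod 4), and to 16/(q²·π) if q ≡ 2 (mod 4). -/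
/-! With `k = 2m + 1` and `q` even, the nodes `x = ℓπ/(2m)` and `x = ℓπ/(2m+2)` satisfy
`kx = ±x + ℓπ`, so there `sin (qkx) = ± sin (qx)` and the antiderivative
`sin (qx)/q - sin (qkx)/(qk)` of `f_{q,k}` is a multiple of `sin (qx)`. After telescoping,
`S(2m+1) = 4/(qk) · (g(m+1) - g(m))` with `g(n) = n ∑_{ℓ=1}^{n} sin (ℓqπ/(2n))`
(`alternatingIntegralSum q m` and `scaledSinSum q n`).
Lagrange's identity evaluates the inner sum: it vanishes when `q/2` is even and equals
`cot (qπ/(4n))` when `q/2` is odd. In the latter case `|cot t - 1/t| ≤ t` gives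
`g(n) = 4n²/(qπ) + O(1)`, whence `(g(m+1) - g(m))/(2m+1) → 4/(qπ)`. -/

open Real Filter MeasureTheory Topology Finset

lemma sin_half_mul_sum_sin (θ : ℝ) (n : ℕ) :
    sin (θ / 2) * ∑ ℓ ∈ Icc 1 n, sin (ℓ * θ) = (cos (θ / 2) - cos ((n + 1 / 2) * θ)) / 2 := by
  induction n with
  | zero => norm_num [div_eq_inv_mul]
  | succ n ih =>
    have step : cos ((n + 1 / 2) * θ) - cos ((n + 1 + 1 / 2) * θ) =
        2 * sin (θ / 2) * sin ((n + 1) * θ) := by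
      rw [cos_sub_cos, show ((n + 1 / 2) * θ - (n + 1 + 1 / 2) * θ) / 2 = -(θ / 2) by ring,
        show ((n + 1 / 2) * θ + (n + 1 + 1 / 2) * θ) / 2 = (n + 1) * θ by ring, sin_neg]
      ring
    rw [sum_Icc_succ_top (by omega), mul_add, ih]
    push_cast
    linarith

lemma sum_sin_eq_zero_of_even {θ : ℝ} {n p : ℕ} (hp : Even p) (hθ : n * θ = p * π) :
    ∑ ℓ ∈ Icc 1 n, sin (ℓ * θ) = 0 := by
  by_cases hs : sin (θ / 2) = 0
  · obtain ⟨i, hi⟩ := sin_eq_zero_iff.mp hs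
    refine sum_eq_zero fun ℓ _ => ?_
    rw [show (ℓ : ℝ) * θ = ((ℓ * i : ℤ) : ℝ) * (2 * π) by
      push_cast; linear_combination (-2 * (ℓ : ℝ)) * hi]
    simpa using sin_add_int_mul_two_pi 0 (ℓ * i)
  · have h := sin_half_mul_sum_sin θ n
    rw [show ((n : ℝ) + 1 / 2) * θ = θ / 2 + p * π by linarith, cos_add_nat_mul_pi, hp.neg_one_pow,
      one_mul, sub_self, zero_div] at h
    exact (mul_eq_zero.mp h).resolve_left hs

lemma sum_sin_eq_cot_of_odd {θ : ℝ} {n p : ℕ} (hp : Odd p) (hθ : n * θ = p * π) :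
    ∑ ℓ ∈ Icc 1 n, sin (ℓ * θ) = cot (θ / 2) := by
  have hs : sin (θ / 2) ≠ 0 := by
    intro hs
    obtain ⟨i, hi⟩ := sin_eq_zero_iff.mp hs
    have h2ni : (2 * n * i : ℤ) = p := by
      have : ((2 * n * i : ℤ) : ℝ) * π = p * π := by
        push_cast; linear_combination 2 * (n : ℝ) * hi + hθ
      exact_mod_cast mul_right_cancel₀ pi_ne_zero this
    have hpZ : Odd (p : ℤ) := by exact_mod_cast hp
    exact Int.not_even_iff_odd.mpr hpZ ⟨n * i, by rw [← h2ni]; ring⟩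
  have h := sin_half_mul_sum_sin θ n
  rw [show ((n : ℝ) + 1 / 2) * θ = θ / 2 + p * π by linarith, cos_add_nat_mul_pi,
    hp.neg_one_pow] at h
  rw [cot_eq_cos_div_sin, eq_div_iff hs]
  linarith

lemma sin_even_mul_add_nat_mul_pi {q : ℕ} (hq : Even q) (y : ℝ) (j : ℕ) :
    sin (q * (y + j * π)) = sin (q * y) := by
  obtain ⟨r, rfl⟩ := hq
  rw [show ((r + r : ℕ) : ℝ) * (y + j * π) = (r + r : ℕ) * y + (r * j : ℕ) * (2 * π) by
    push_cast; ring, sin_add_nat_mul_two_pi]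

lemma sin_natCast_mul_even_mul_pi_div {q : ℕ} (hq : Even q) {n : ℕ} (hn : n ≠ 0) :
    sin (n * (q * π / (2 * n))) = 0 := by
  obtain ⟨r, rfl⟩ := hq
  rw [show (n : ℝ) * ((r + r : ℕ) * π / (2 * n)) = r * π by push_cast; field_simp; ring]
  exact sin_nat_mul_pi r

lemma sum_Icc_sub_sub_one (G : ℝ → ℝ) (m : ℕ) :
    ∑ ℓ ∈ Icc 1 m, (G ℓ - G (ℓ - 1)) = G m - G 0 := by
  induction m with
  | zero => simp
  | succ m ih =>
    rw [sum_Icc_succ_top (by omega), ih]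
    push_cast
    ring_nf

noncomputable def cosSubCosPrimitive (q k x : ℝ) : ℝ := sin (q * x) / q - sin (q * k * x) / (q * k)

lemma integral_cos_sub_cos {q k : ℝ} (hq : q ≠ 0) (hk : k ≠ 0) (u v : ℝ) :
    ∫ x in u..v, (cos (q * x) - cos (q * k * x)) =
      cosSubCosPrimitive q k v - cosSubCosPrimitive q k u := by
  refine intervalIntegral.integral_eq_sub_of_hasDerivAt (fun x _ => ?_)
    ((by fun_prop : Continuous fun x => cos (q * x) - cos (q * k * x)).intervalIntegrable u v)
  have h1 := ((hasDerivAt_id x).const_mul q).sin.div_const q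
  have h2 := ((hasDerivAt_id x).const_mul (q * k)).sin.div_const (q * k)
  convert h1.sub h2 using 1
  · rfl
  · simp only [id, mul_one]; field_simp

lemma cosSubCosPrimitive_of_mul_eq_add {q : ℕ} (hq : Even q) {k x : ℝ} {j : ℕ}
    (h : k * x = x + j * π) :
    cosSubCosPrimitive q k x = (1 / q - 1 / (q * k)) * sin (q * x) := by
  rw [cosSubCosPrimitive, mul_assoc, h, sin_even_mul_add_nat_mul_pi hq]
  ring

lemma cosSubCosPrimitive_of_mul_eq_neg_add {q : ℕ} (hq : Even q) {k x : ℝ} {j : ℕ}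
    (h : k * x = -x + j * π) :
    cosSubCosPrimitive q k x = (1 / q + 1 / (q * k)) * sin (q * x) := by
  rw [cosSubCosPrimitive, mul_assoc, h, sin_even_mul_add_nat_mul_pi hq, mul_neg, sin_neg]
  ring

noncomputable def alternatingIntegralSum (q m : ℕ) : ℝ :=
  ∑ ℓ ∈ Finset.Icc 1 m,
    ((∫ x in (((ℓ : ℝ) - 1) * π / (2 * (m : ℝ)))..((ℓ : ℝ) * π / (2 * (m : ℝ) + 2)),
        (Real.cos ((q : ℝ) * x) - Real.cos ((q : ℝ) * (2 * (m : ℝ) + 1) * x))) -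
     (∫ x in ((ℓ : ℝ) * π / (2 * (m : ℝ) + 2))..((ℓ : ℝ) * π / (2 * (m : ℝ))),
        (Real.cos ((q : ℝ) * x) - Real.cos ((q : ℝ) * (2 * (m : ℝ) + 1) * x))))

noncomputable def scaledSinSum (q : ℝ) (n : ℕ) : ℝ := n * ∑ ℓ ∈ Icc 1 n, sin (ℓ * (q * π / (2 * n)))

lemma alternatingIntegralSum_eq {q m : ℕ} (hq : Even q) (hq0 : q ≠ 0) (hm : m ≠ 0) :
    alternatingIntegralSum q m =
      4 / (q * (2 * m + 1)) * (scaledSinSum q (m + 1) - scaledSinSum q m) := by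
  have hqR : (q : ℝ) ≠ 0 := by exact_mod_cast hq0
  have hmR : (m : ℝ) ≠ 0 := by exact_mod_cast hm
  have hk : (2 * m + 1 : ℝ) ≠ 0 := by positivity
  set P := cosSubCosPrimitive q (2 * m + 1) with hP
  have hb (ℓ : ℕ) : P (ℓ * π / (2 * m + 2)) =
      (1 / q + 1 / (q * (2 * m + 1))) * sin (ℓ * (q * π / (2 * (m + 1 : ℕ)))) := by
    rw [hP, cosSubCosPrimitive_of_mul_eq_neg_add hq (j := ℓ) (by field_simp; ring)]
    push_cast; ring_nf
  have hc (y : ℝ) (j : ℕ) (hy : y = j) : P (y * π / (2 * m)) =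
      (1 / q - 1 / (q * (2 * m + 1))) * sin (y * (q * π / (2 * m))) := by
    rw [hP, cosSubCosPrimitive_of_mul_eq_add hq (j := j) (by subst hy; field_simp; ring)]
    ring_nf
  have hterm : ∀ ℓ ∈ Icc 1 m,
      (P (ℓ * π / (2 * m + 2)) - P ((ℓ - 1) * π / (2 * m))) -
        (P (ℓ * π / (2 * m)) - P (ℓ * π / (2 * m + 2))) =
      2 * ((1 / q + 1 / (q * (2 * m + 1))) * sin (ℓ * (q * π / (2 * (m + 1 : ℕ)))) -
        (1 / q - 1 / (q * (2 * m + 1))) * sin (ℓ * (q * π / (2 * m)))) +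
      (P (ℓ * π / (2 * m)) - P ((ℓ - 1) * π / (2 * m))) := by
    intro ℓ _
    rw [hb, hc ℓ ℓ rfl]
    ring
  have htel : ∑ ℓ ∈ Icc 1 m, (P (ℓ * π / (2 * m)) - P ((ℓ - 1) * π / (2 * m))) = 0 := by
    rw [sum_Icc_sub_sub_one (fun y => P (y * π / (2 * m))), hc m m rfl, hc 0 0 (by simp),
      sin_natCast_mul_even_mul_pi_div hq hm]
    simp
  have htop : ∑ ℓ ∈ Icc 1 m, sin (ℓ * (q * π / (2 * (m + 1 : ℕ)))) =
      ∑ ℓ ∈ Icc 1 (m + 1), sin (ℓ * (q * π / (2 * (m + 1 : ℕ)))) := by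
    rw [sum_Icc_succ_top (by omega), sin_natCast_mul_even_mul_pi_div hq (by omega), add_zero]
  simp only [alternatingIntegralSum, integral_cos_sub_cos hqR hk]
  rw [sum_congr rfl hterm, sum_add_distrib, htel, add_zero, ← mul_sum,
    sum_sub_distrib, ← mul_sum, ← mul_sum, htop, scaledSinSum, scaledSinSum]
  set s₁ := ∑ ℓ ∈ Icc 1 (m + 1), sin (ℓ * (q * π / (2 * (m + 1 : ℕ))))
  set s₂ := ∑ ℓ ∈ Icc 1 m, sin (ℓ * (q * π / (2 * m)))
  field_simp
  push_cast
  ring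

lemma scaledSinSum_eq_zero {q : ℕ} (hq : q % 4 = 0) (n : ℕ) : scaledSinSum q n = 0 := by
  rcases eq_or_ne n 0 with rfl | hn
  · simp [scaledSinSum]
  have hθ : n * (q * π / (2 * n)) = (q / 2 : ℕ) * π := by
    rw [Nat.cast_div_charZero (by omega), Nat.cast_ofNat]; field_simp
  rw [scaledSinSum, sum_sin_eq_zero_of_even (Nat.even_iff.mpr (by omega)) hθ, mul_zero]

lemma scaledSinSum_eq_mul_cot {q : ℕ} (hq : q % 4 = 2) {n : ℕ} (hn : n ≠ 0) :
    scaledSinSum q n = n * cot (q * π / 4 / n) := by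
  have hθ : n * (q * π / (2 * n)) = (q / 2 : ℕ) * π := by
    rw [Nat.cast_div_charZero (by omega), Nat.cast_ofNat]; field_simp
  rw [scaledSinSum, sum_sin_eq_cot_of_odd (Nat.odd_iff.mpr (by omega)) hθ]
  ring_nf

lemma abs_cot_sub_inv_le {t : ℝ} (ht : 0 < t) (ht1 : t ≤ 1) : |cot t - t⁻¹| ≤ t := by
  have hsin_le : sin t ≤ t := (sin_lt ht).le
  have hsin_ge : t - t ^ 3 / 6 < sin t := sin_gt_sub_cube ht
  have hcos_le : cos t ≤ 1 := cos_le_one t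
  have hcos_ge : 1 - t ^ 2 / 2 ≤ cos t := one_sub_sq_div_two_le_cos
  have hsin_half : t / 2 ≤ sin t := by nlinarith [pow_le_one₀ ht.le ht1 (n := 2)]
  have hsin_pos : 0 < sin t := by linarith
  rw [cot_eq_cos_div_sin, show cos t / sin t - t⁻¹ = (t * cos t - sin t) / (t * sin t) by
    field_simp, abs_div,
    abs_of_pos (mul_pos ht hsin_pos), div_le_iff₀ (mul_pos ht hsin_pos), abs_le]
  have h₁ := mul_le_mul_of_nonneg_left hsin_half (sq_nonneg t)
  have h₂ := mul_le_mul_of_nonneg_left hcos_ge ht.le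
  have h₃ := mul_le_mul_of_nonneg_left hcos_le ht.le
  constructor <;> nlinarith

lemma abs_natCast_mul_cot_div_sub_le {c : ℝ} (hc : 0 < c) {n : ℕ} (hn : c ≤ n) :
    |n * cot (c / n) - n ^ 2 / c| ≤ c := by
  have hnpos : (0 : ℝ) < n := hc.trans_le hn
  have ht : 0 < c / n := by positivity
  have key := abs_cot_sub_inv_le ht ((div_le_one hnpos).mpr hn)
  calc |n * cot (c / n) - n ^ 2 / c| = n * |cot (c / n) - (c / n)⁻¹| := by
        rw [← abs_of_pos hnpos, ← abs_mul, abs_of_pos hnpos]; congr 1; field_simp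
    _ ≤ n * (c / n) := by gcongr
    _ = c := by field_simp

lemma tendsto_sub_div_two_mul_add_one {g : ℕ → ℝ} {c C : ℝ} (hc : c ≠ 0)
    (hg : ∀ᶠ n in atTop, |g n - n ^ 2 / c| ≤ C) :
    Tendsto (fun m : ℕ => (g (m + 1) - g m) / (2 * m + 1)) atTop (𝓝 c⁻¹) := by
  set h : ℕ → ℝ := fun n => g n - n ^ 2 / c
  have hbdd : IsBoundedUnder (· ≤ ·) atTop (fun m : ℕ => ‖h (m + 1) - h m‖) := by
    refine isBoundedUnder_of_eventually_le (a := C + C) ?_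
    filter_upwards [tendsto_add_atTop_nat 1 hg, hg] with m h₁ h₂
    exact (norm_sub_le _ _).trans (add_le_add h₁ h₂)
  have hinv : Tendsto (fun m : ℕ => (2 * (m : ℝ) + 1)⁻¹) atTop (𝓝 0) :=
    tendsto_inv_atTop_zero.comp <| tendsto_atTop_add_const_right _ 1 <|
      tendsto_natCast_atTop_atTop.const_mul_atTop two_pos
  have herr := isBoundedUnder_le_mul_tendsto_zero hbdd hinv
  convert herr.const_add c⁻¹ using 2 with m
  · have : (2 * (m : ℝ) + 1) ≠ 0 := by positivity
    simp only [h]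
    push_cast
    field_simp
    ring
  · simp

lemma tendsto_natCast_mul_cot_sub_div {c : ℝ} (hc : 0 < c) :
    Tendsto (fun m : ℕ => ((m + 1 : ℕ) * cot (c / (m + 1 : ℕ)) - m * cot (c / m)) / (2 * m + 1))
      atTop (𝓝 c⁻¹) :=
  tendsto_sub_div_two_mul_add_one hc.ne' <| (tendsto_natCast_atTop_atTop.eventually_ge_atTop c).mono
    fun _ hn => abs_natCast_mul_cot_div_sub_le hc hn

theorem trig_integral_even_q_odd_k (q : ℕ) (hq : Even q) (hpos : 0 < q) :
    (q % 4 = 0 →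
      Tendsto (fun m : ℕ =>
        ∑ ℓ ∈ Finset.Icc 1 m,
          ((∫ x in (((ℓ : ℝ) - 1) * π / (2 * (m : ℝ)))..((ℓ : ℝ) * π / (2 * (m : ℝ) + 2)),
              (Real.cos ((q : ℝ) * x) - Real.cos ((q : ℝ) * (2 * (m : ℝ) + 1) * x))) -
           (∫ x in ((ℓ : ℝ) * π / (2 * (m : ℝ) + 2))..((ℓ : ℝ) * π / (2 * (m : ℝ))),
              (Real.cos ((q : ℝ) * x) - Real.cos ((q : ℝ) * (2 * (m : ℝ) + 1) * x)))))
        atTop (𝓝 0)) ∧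
    (q % 4 = 2 →
      Tendsto (fun m : ℕ =>
        ∑ ℓ ∈ Finset.Icc 1 m,
          ((∫ x in (((ℓ : ℝ) - 1) * π / (2 * (m : ℝ)))..((ℓ : ℝ) * π / (2 * (m : ℝ) + 2)),
              (Real.cos ((q : ℝ) * x) - Real.cos ((q : ℝ) * (2 * (m : ℝ) + 1) * x))) -
           (∫ x in ((ℓ : ℝ) * π / (2 * (m : ℝ) + 2))..((ℓ : ℝ) * π / (2 * (m : ℝ))),
              (Real.cos ((q : ℝ) * x) - Real.cos ((q : ℝ) * (2 * (m : ℝ) + 1) * x)))))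
        atTop (𝓝 (16 / ((q : ℝ) ^ 2 * π)))) := by
  show (q % 4 = 0 → Tendsto (alternatingIntegralSum q) atTop (𝓝 0)) ∧
    (q % 4 = 2 → Tendsto (alternatingIntegralSum q) atTop (𝓝 (16 / ((q : ℝ) ^ 2 * π))))
  have hformula : ∀ᶠ m in atTop, alternatingIntegralSum q m =
      4 / (q * (2 * m + 1)) * (scaledSinSum q (m + 1) - scaledSinSum q m) :=
    (eventually_ne_atTop 0).mono fun m hm => alternatingIntegralSum_eq hq hpos.ne' hm
  refine ⟨fun h4 => ?_, fun h4 => ?_⟩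
  · refine tendsto_const_nhds.congr' (hformula.mono fun m hm => ?_)
    rw [hm, scaledSinSum_eq_zero h4, scaledSinSum_eq_zero h4]
    ring
  · have hc : (0 : ℝ) < q * π / 4 := by positivity
    have hlim := (tendsto_natCast_mul_cot_sub_div hc).const_mul (4 / (q : ℝ))
    rw [show 4 / (q : ℝ) * (q * π / 4)⁻¹ = 16 / (q ^ 2 * π) by field_simp; ring] at hlim
    refine hlim.congr' ((hformula.and (eventually_ne_atTop 0)).mono fun m ⟨hm, hm0⟩ => ?_)
    rw [hm, scaledSinSum_eq_mul_cot h4 hm0, scaledSinSum_eq_mul_cot h4 m.succ_ne_zero]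
    field_simp
end

section
/- Let q be an odd positive integer, and for even k = 2m set f_{q,k}(x) = cos(qx) − cos(qkx) and S(k) = Σ_{ℓ=1}^{k/2} ( ∫_{(ℓ−1)·2π/(k−1)}^{ℓ·2π/(k+1)} f_{q,k}(x) dx − ∫_{ℓ·2π/(k+1)}^{ℓ·2π/(k−1)} f_{q,k}(x) dx ). Then, as m → ∞ over the positive integers, S(2m) converges to 8/(q²·π). -/
/-!
Put `U = πq/(2m-1)` and `V = πq/(2m+1)`. The integrand has antiderivative
`sin(qx)/q - sin(2mqx)/(2mq)`, and at the nodes `ℓ·2π/(2m±1)` the number `q(2m±1)x` is a multiple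
of `2π`, so there `sin(2mqx) = ∓sin(qx)`. Each summand thus becomes a combination of `sin(2ℓV)`,
`sin(2(ℓ-1)U)` and `sin(2ℓU)`, and the sums over `ℓ` telescope after multiplication by `sin V`,
resp. `sin U`; since `q` is odd, the boundary terms are `cos((2m+1)V) = -1` and
`cos(2mU) = -cos U`. This gives the closed form
`((1 + 1/(2m)) cot(V/2) - (1 - 1/(2m)) (cot(U/2) - sin U)) / q`.
Replacing each `cot x` by `1/x` there gives exactly `8/(q²π)`, and `cot x - 1/x = O(x)`.
-/

open Real Filter MeasureTheory Topology

open Finset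

lemma sum_Icc_one_sub_sub_one (g : ℝ → ℝ) (m : ℕ) :
    ∑ ℓ ∈ Icc 1 m, (g ℓ - g (ℓ - 1)) = g m - g 0 := by
  induction m with
  | zero => simp
  | succ n ih =>
    rw [sum_Icc_succ_top (by omega), ih]
    push_cast
    ring_nf

lemma one_add_cos_div_sin (x : ℝ) : (1 + cos x) / sin x = cot (x / 2) := by
  rw [cot_eq_cos_div_sin]
  conv_lhs => rw [← mul_div_cancel₀ x two_ne_zero, cos_two_mul, sin_two_mul]
  rcases eq_or_ne (cos (x / 2)) 0 with h | h
  · simp [h]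
  · field_simp
    ring

lemma one_sub_cos_mul_cot (x : ℝ) : (1 - cos x) * cot (x / 2) = sin x := by
  rw [cot_eq_cos_div_sin]
  conv_lhs => rw [← mul_div_cancel₀ x two_ne_zero, cos_two_mul]
  conv_rhs => rw [← mul_div_cancel₀ x two_ne_zero, sin_two_mul]
  rcases eq_or_ne (sin (x / 2)) 0 with h | h
  · simp [h]
  · rw [show 1 - (2 * cos (x / 2) ^ 2 - 1) = 2 * sin (x / 2) ^ 2 by
      linear_combination (-2) * sin_sq_add_cos_sq (x / 2)]
    field_simp

lemma two_mul_sum_sin_eq_cot {θ : ℝ} {m : ℕ} (hs : sin θ ≠ 0) (hm : cos ((2 * m + 1) * θ) = -1) :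
    2 * ∑ ℓ ∈ Icc 1 m, sin (2 * ℓ * θ) = cot (θ / 2) := by
  have key : ∀ ℓ : ℝ, 2 * sin θ * sin (2 * ℓ * θ) =
      -(cos ((2 * ℓ + 1) * θ) - cos ((2 * (ℓ - 1) + 1) * θ)) := by
    intro ℓ
    rw [show (2 * ℓ + 1) * θ = 2 * ℓ * θ + θ by ring,
      show (2 * (ℓ - 1) + 1) * θ = 2 * ℓ * θ - θ by ring, cos_add, cos_sub]
    ring
  have htel : sin θ * (2 * ∑ ℓ ∈ Icc 1 m, sin (2 * ℓ * θ)) = 1 + cos θ := by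
    rw [← mul_assoc, mul_comm (sin θ), mul_sum]
    simp only [key, sum_neg_distrib, sum_Icc_one_sub_sub_one (fun t => cos ((2 * t + 1) * θ))]
    rw [hm, mul_zero, zero_add, one_mul]
    ring
  rw [← one_add_cos_div_sin, ← htel, mul_div_cancel_left₀ _ hs]

lemma sum_sin_add_sin_eq_cot_sub_sin {θ : ℝ} {m : ℕ} (hs : sin θ ≠ 0)
    (hm : cos (2 * m * θ) = -cos θ) :
    ∑ ℓ ∈ Icc 1 m, (sin (2 * (ℓ - 1) * θ) + sin (2 * ℓ * θ)) = cot (θ / 2) - sin θ := by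
  have key : ∀ ℓ : ℝ, sin θ * (sin (2 * (ℓ - 1) * θ) + sin (2 * ℓ * θ)) =
      -(cos θ * cos (2 * ℓ * θ) - cos θ * cos (2 * (ℓ - 1) * θ)) := by
    intro ℓ
    rw [show 2 * (ℓ - 1) * θ = (2 * ℓ - 1) * θ - θ by ring,
      show 2 * ℓ * θ = (2 * ℓ - 1) * θ + θ by ring, sin_add, sin_sub, cos_add, cos_sub]
    ring
  have htel : sin θ * ∑ ℓ ∈ Icc 1 m, (sin (2 * (ℓ - 1) * θ) + sin (2 * ℓ * θ)) =
      cos θ * (1 + cos θ) := by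
    rw [mul_sum]
    simp only [key, sum_neg_distrib, sum_Icc_one_sub_sub_one (fun t => cos θ * cos (2 * t * θ))]
    rw [hm, mul_zero, zero_mul, cos_zero]
    ring
  rw [← one_sub_cos_mul_cot, ← one_add_cos_div_sin]
  field_simp
  linear_combination htel

lemma integral_cos_mul_sub_cos_mul {c d : ℝ} (hc : c ≠ 0) (hd : d ≠ 0) (a b : ℝ) :
    ∫ x in a..b, (cos (c * x) - cos (d * x)) =
      (sin (c * b) / c - sin (d * b) / d) - (sin (c * a) / c - sin (d * a) / d) := by
  have hcos : ∀ e : ℝ, IntervalIntegrable (fun x => cos (e * x)) volume a b := fun e =>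
    (by fun_prop : Continuous fun x => cos (e * x)).intervalIntegrable a b
  rw [intervalIntegral.integral_sub (hcos c) (hcos d),
    intervalIntegral.integral_comp_mul_left cos hc, intervalIntegral.integral_comp_mul_left cos hd,
    integral_cos, integral_cos, smul_eq_mul, smul_eq_mul]
  ring

lemma sin_mul_two_mul_div_two_mul_add_one (q : ℕ) (n : ℤ) {m : ℝ} (hm : 2 * m + 1 ≠ 0) :
    sin (q * (2 * m) * (n * 2 * π / (2 * m + 1))) = -sin (q * (n * 2 * π / (2 * m + 1))) := by
  rw [← sin_int_mul_two_pi_sub _ (q * n)]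
  congr 1
  push_cast
  field_simp
  ring

lemma sin_mul_two_mul_div_two_mul_sub_one (q : ℕ) (n : ℤ) {m : ℝ} (hm : 2 * m - 1 ≠ 0) :
    sin (q * (2 * m) * (n * 2 * π / (2 * m - 1))) = sin (q * (n * 2 * π / (2 * m - 1))) := by
  rw [← sin_add_int_mul_two_pi (q * (n * 2 * π / (2 * m - 1))) (q * n)]
  congr 1
  push_cast
  field_simp
  ring

lemma integral_sub_integral_eq {q m : ℕ} (hq : q ≠ 0) (hm : m ≠ 0) (ℓ : ℕ) :
    ((∫ x in ((ℓ : ℝ) - 1) * 2 * π / (2 * (m : ℝ) - 1)..(ℓ : ℝ) * 2 * π / (2 * (m : ℝ) + 1),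
        (cos ((q : ℝ) * x) - cos ((q : ℝ) * (2 * (m : ℝ)) * x))) -
      (∫ x in (ℓ : ℝ) * 2 * π / (2 * (m : ℝ) + 1)..(ℓ : ℝ) * 2 * π / (2 * (m : ℝ) - 1),
        (cos ((q : ℝ) * x) - cos ((q : ℝ) * (2 * (m : ℝ)) * x)))) =
      ((1 + 1 / (2 * m)) * (2 * sin (2 * ℓ * (π * q / (2 * m + 1)))) -
        (1 - 1 / (2 * m)) * (sin (2 * (ℓ - 1) * (π * q / (2 * m - 1))) +
          sin (2 * ℓ * (π * q / (2 * m - 1))))) / q := by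
  have hq' : (q : ℝ) ≠ 0 := by exact_mod_cast hq
  have hm' : (m : ℝ) ≠ 0 := by exact_mod_cast hm
  have hm₁ : (1 : ℝ) ≤ m := by exact_mod_cast Nat.one_le_iff_ne_zero.mpr hm
  have hplus : 2 * (m : ℝ) + 1 ≠ 0 := by linarith
  have hminus : 2 * (m : ℝ) - 1 ≠ 0 := by linarith
  have ha := sin_mul_two_mul_div_two_mul_sub_one q ((ℓ : ℤ) - 1) hminus
  have hb := sin_mul_two_mul_div_two_mul_add_one q ℓ hplus
  have hc := sin_mul_two_mul_div_two_mul_sub_one q ℓ hminus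
  push_cast at ha hb hc
  have hd : (q : ℝ) * (2 * m) ≠ 0 := by positivity
  rw [integral_cos_mul_sub_cos_mul hq' hd, integral_cos_mul_sub_cos_mul hq' hd, ha, hb, hc]
  rw [show (q : ℝ) * (ℓ * 2 * π / (2 * m + 1)) = 2 * ℓ * (π * q / (2 * m + 1)) by ring,
    show (q : ℝ) * ((ℓ - 1) * 2 * π / (2 * m - 1)) = 2 * (ℓ - 1) * (π * q / (2 * m - 1)) by ring,
    show (q : ℝ) * (ℓ * 2 * π / (2 * m - 1)) = 2 * ℓ * (π * q / (2 * m - 1)) by ring]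
  field_simp
  ring

lemma sum_integral_sub_integral_eq {q m : ℕ} (hq : Odd q) (hqm : q < m) :
    ∑ ℓ ∈ Icc 1 m,
        ((∫ x in ((ℓ : ℝ) - 1) * 2 * π / (2 * (m : ℝ) - 1)..(ℓ : ℝ) * 2 * π / (2 * (m : ℝ) + 1),
            (cos ((q : ℝ) * x) - cos ((q : ℝ) * (2 * (m : ℝ)) * x))) -
          (∫ x in (ℓ : ℝ) * 2 * π / (2 * (m : ℝ) + 1)..(ℓ : ℝ) * 2 * π / (2 * (m : ℝ) - 1),
            (cos ((q : ℝ) * x) - cos ((q : ℝ) * (2 * (m : ℝ)) * x)))) =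
      ((1 + 1 / (2 * m)) * cot (π * q / (2 * m + 1) / 2) -
        (1 - 1 / (2 * m)) * (cot (π * q / (2 * m - 1) / 2) - sin (π * q / (2 * m - 1)))) / q := by
  have hq₁ : (1 : ℝ) ≤ q := by exact_mod_cast hq.pos
  have hqm' : (q : ℝ) + 1 ≤ m := by exact_mod_cast hqm
  have hplus : 0 < 2 * (m : ℝ) + 1 := by linarith
  have hminus : 0 < 2 * (m : ℝ) - 1 := by linarith
  have hU : π * q / (2 * m - 1) ∈ Set.Ioo 0 π := by
    refine ⟨by positivity, ?_⟩
    rw [div_lt_iff₀ hminus]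
    nlinarith [pi_pos]
  have hV : π * q / (2 * m + 1) ∈ Set.Ioo 0 π := by
    refine ⟨by positivity, ?_⟩
    rw [div_lt_iff₀ hplus]
    nlinarith [pi_pos]
  have hcosV : cos ((2 * m + 1) * (π * q / (2 * m + 1))) = -1 := by
    rw [mul_div_cancel₀ _ hplus.ne', mul_comm, cos_nat_mul_pi, hq.neg_one_pow]
  have hcosU : cos (2 * m * (π * q / (2 * m - 1))) = -cos (π * q / (2 * m - 1)) := by
    rw [show 2 * m * (π * q / (2 * m - 1)) = π * q / (2 * m - 1) + q * π by field_simp; ring,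
      cos_add_nat_mul_pi, hq.neg_one_pow, neg_one_mul]
  rw [sum_congr rfl fun ℓ _ => integral_sub_integral_eq hq.pos.ne' (by omega) ℓ, ← sum_div,
    sum_sub_distrib, ← mul_sum, ← mul_sum, ← mul_sum,
    two_mul_sum_sin_eq_cot (sin_pos_of_mem_Ioo hV).ne' hcosV,
    sum_sin_add_sin_eq_cot_sub_sin (sin_pos_of_mem_Ioo hU).ne' hcosU]

lemma abs_cot_sub_inv_le_s18 {x : ℝ} (hx₀ : 0 < x) (hx₁ : x ≤ 1) : |cot x - x⁻¹| ≤ x := by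
  have hx₃ : x ^ 3 ≤ x := by nlinarith [pow_le_one₀ hx₀.le hx₁ (n := 2)]
  have hs : x - x ^ 3 / 6 ≤ sin x := sin_ge_sub_cube hx₀.le
  have hs' : sin x ≤ x := sin_le hx₀.le
  have hc : 1 - x ^ 2 / 2 ≤ cos x := one_sub_sq_div_two_le_cos
  have hc' : cos x ≤ 1 := cos_le_one x
  have hs₀ : 0 < sin x := by linarith
  rw [cot_eq_cos_div_sin, inv_eq_one_div, div_sub_div _ _ hs₀.ne' hx₀.ne', abs_div,
    abs_of_pos (mul_pos hs₀ hx₀), div_le_iff₀ (mul_pos hs₀ hx₀), abs_le]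
  constructor <;> nlinarith

lemma tendsto_cot_sub_inv_nhdsGT_zero : Tendsto (fun x => cot x - x⁻¹) (𝓝[>] 0) (𝓝 0) := by
  refine squeeze_zero_norm' ?_ (tendsto_nhdsWithin_of_tendsto_nhds tendsto_id)
  filter_upwards [Ioc_mem_nhdsGT zero_lt_one] with x hx
  exact abs_cot_sub_inv_le_s18 hx.1 hx.2

lemma Filter.Tendsto.const_div_atTop_nhdsGT_zero {α : Type*} {l : Filter α} {g : α → ℝ}
    (hg : Tendsto g l atTop) {c : ℝ} (hc : 0 < c) : Tendsto (fun x => c / g x) l (𝓝[>] 0) :=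
  tendsto_nhdsWithin_iff.mpr
    ⟨tendsto_const_nhds.div_atTop hg, (hg.eventually_gt_atTop 0).mono fun _ h => div_pos hc h⟩

lemma tendsto_cot_combination {q : ℝ} (hq : 0 < q) :
    Tendsto (fun m : ℕ => ((1 + 1 / (2 * m)) * cot (π * q / (2 * m + 1) / 2) -
        (1 - 1 / (2 * m)) * (cot (π * q / (2 * m - 1) / 2) - sin (π * q / (2 * m - 1)))) / q)
      atTop (𝓝 (8 / (q ^ 2 * π))) := by
  have h2m : Tendsto (fun m : ℕ => 2 * (m : ℝ)) atTop atTop :=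
    tendsto_natCast_atTop_atTop.const_mul_atTop two_pos
  have h2m_add : Tendsto (fun m : ℕ => 2 * (m : ℝ) + 1) atTop atTop :=
    tendsto_atTop_add_const_right _ 1 h2m
  have h2m_sub : Tendsto (fun m : ℕ => 2 * (m : ℝ) - 1) atTop atTop := by
    simpa only [← sub_eq_add_neg] using tendsto_atTop_add_const_right _ (-1) h2m
  have hpq : 0 < π * q / 2 := by positivity
  have hplus : Tendsto (fun m : ℕ => π * q / (2 * m + 1) / 2) atTop (𝓝[>] 0) := by
    simpa only [div_right_comm] using h2m_add.const_div_atTop_nhdsGT_zero hpq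
  have hminus : Tendsto (fun m : ℕ => π * q / (2 * m - 1) / 2) atTop (𝓝[>] 0) := by
    simpa only [div_right_comm] using h2m_sub.const_div_atTop_nhdsGT_zero hpq
  have hsin : Tendsto (fun m : ℕ => sin (π * q / (2 * m - 1))) atTop (𝓝 0) := by
    have hU : Tendsto (fun m : ℕ => π * q / (2 * m - 1)) atTop (𝓝 0) :=
      tendsto_const_nhds.div_atTop h2m_sub
    simpa only [Function.comp_def, sin_zero] using (continuous_sin.tendsto 0).comp hU
  have hinv : Tendsto (fun m : ℕ => 1 / (2 * (m : ℝ))) atTop (𝓝 0) :=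
    tendsto_const_nhds.div_atTop h2m
  have hlim := (((hinv.const_add 1).mul (tendsto_cot_sub_inv_nhdsGT_zero.comp hplus)).sub
    ((hinv.const_sub 1).mul ((tendsto_cot_sub_inv_nhdsGT_zero.comp hminus).sub hsin))).div_const q
    |>.const_add (8 / (q ^ 2 * π))
  simp only [add_zero, sub_zero, mul_zero, zero_div] at hlim
  refine hlim.congr' ?_
  filter_upwards [eventually_ge_atTop 1] with m hm
  have hm' : (1 : ℝ) ≤ m := by exact_mod_cast hm
  have : (2 * m - 1 : ℝ) ≠ 0 := by linarith
  simp only [Function.comp_apply]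
  field_simp
  ring

theorem trig_integral_odd_q_even_k_general (q : ℕ) (hq : Odd q) :
    Tendsto (fun m : ℕ =>
      ∑ ℓ ∈ Finset.Icc 1 m,
        ((∫ x in (((ℓ : ℝ) - 1) * 2 * π / (2 * (m : ℝ) - 1))..((ℓ : ℝ) * 2 * π / (2 * (m : ℝ) + 1)),
            (Real.cos ((q : ℝ) * x) - Real.cos ((q : ℝ) * (2 * (m : ℝ)) * x))) -
         (∫ x in ((ℓ : ℝ) * 2 * π / (2 * (m : ℝ) + 1))..((ℓ : ℝ) * 2 * π / (2 * (m : ℝ) - 1)),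
            (Real.cos ((q : ℝ) * x) - Real.cos ((q : ℝ) * (2 * (m : ℝ)) * x)))))
      atTop (𝓝 (8 / ((q : ℝ) ^ 2 * π))) := by
  refine (tendsto_cot_combination (by exact_mod_cast hq.pos)).congr' ?_
  filter_upwards [eventually_gt_atTop q] with m hm
  exact (sum_integral_sub_integral_eq hq hm).symm

theorem trig_integral_odd_q_even_k (q : ℕ) (hq : Odd q) (hpos : 0 < q) :
    Tendsto (fun m : ℕ =>
      ∑ ℓ ∈ Finset.Icc 1 m,
        ((∫ x in (((ℓ : ℝ) - 1) * 2 * π / (2 * (m : ℝ) - 1))..((ℓ : ℝ) * 2 * π / (2 * (m : ℝ) + 1)),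
            (Real.cos ((q : ℝ) * x) - Real.cos ((q : ℝ) * (2 * (m : ℝ)) * x))) -
         (∫ x in ((ℓ : ℝ) * 2 * π / (2 * (m : ℝ) + 1))..((ℓ : ℝ) * 2 * π / (2 * (m : ℝ) - 1)),
            (Real.cos ((q : ℝ) * x) - Real.cos ((q : ℝ) * (2 * (m : ℝ)) * x)))))
      atTop (𝓝 (8 / ((q : ℝ) ^ 2 * π))) :=
  trig_integral_odd_q_even_k_general q hq
end

section
/- Let q be an even positive integer, and for even k = 2m set f_{q,k}(x) = cos(qx) − cos(qkx) and S(k) = Σ_{ℓ=1}^{k/2} ( ∫_{(ℓ−1)π/(k−1)}^{ℓπ/(k+1)} f_{q,k}(x) dx − ∫_{ℓπ/(k+1)}^{ℓπ/(k−1)} f_{q,k}(x) dx ). Then, as m → ∞ over the positive integers, S(2m) converges to 0 if q ≡ 0 (mod 4), and to 16/(q²·π) if q ≡ 2 (mod 4). -/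
open Real Filter MeasureTheory Topology

/-!
Let `F x = sin (q x) / q - sin (2 m q x) / (2 m q)` be the primitive of the integrand. Since `q` is
even, `F (ℓ π / (2 m ± 1)) = (1 / q ± 1 / (2 m q)) * sin (q ℓ π / (2 m ± 1))`, so `S (2 m)` is a
combination of two Lagrange sums `∑ j, sin (j θ)`. With `w = q π / (4 (2 m ± 1))` these sum to
`-tan w / 2` when `4 ∣ q` and to `cot w / 2` when `q ≡ 2 [MOD 4]`. As `w → 0` the tangents vanish,
while `cot w = 1 / w + o(1)` and the principal parts `1 / w` of the two sums combine to exactly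
`16 / (q² π)`.
-/

namespace TrigIntegral

lemma abs_mul_cos_sub_sin_le (x : ℝ) : |x * cos x - sin x| ≤ |x| ^ 3 / 2 := by
  wlog hx : 0 ≤ x generalizing x
  · have h := this (-x) (by linarith)
    rwa [cos_neg, sin_neg, abs_neg, neg_mul, ← neg_sub', abs_neg] at h
  rw [abs_of_nonneg hx, abs_le]
  have hcos_lower : x * (1 - x ^ 2 / 2) ≤ x * cos x :=
    mul_le_mul_of_nonneg_left one_sub_sq_div_two_le_cos hx
  have hcos_upper : x * cos x ≤ x := mul_le_of_le_one_right hx (cos_le_one x)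
  constructor <;> nlinarith [sin_le hx, sin_ge_sub_cube hx, pow_nonneg hx 3]

lemma tendsto_cot_sub_inv : Tendsto (fun x => cot x - x⁻¹) (𝓝[≠] 0) (𝓝 0) := by
  have hsinc : ∀ᶠ x in 𝓝[≠] (0 : ℝ), sinc x ≠ 0 :=
    nhdsWithin_le_nhds (continuous_sinc.continuousAt.eventually_ne (by simp))
  have hbound : Tendsto (fun x => |x| / (2 * |sinc x|)) (𝓝[≠] 0) (𝓝 0) := by
    have h : Tendsto (fun x => |x| / (2 * |sinc x|)) (𝓝 0) (𝓝 (|0| / (2 * |sinc 0|))) :=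
      (continuous_abs.tendsto 0).div ((continuous_sinc.tendsto 0).abs.const_mul 2) (by simp)
    simpa using h.mono_left nhdsWithin_le_nhds
  refine squeeze_zero_norm' ?_ hbound
  filter_upwards [hsinc, self_mem_nhdsWithin] with x hsinc_x (hx0 : x ≠ 0)
  have hsin : sin x = x * sinc x := by rw [sinc_of_ne_zero hx0]; field_simp
  have : cot x - x⁻¹ = (x * cos x - sin x) / (x ^ 2 * sinc x) := by
    rw [cot_eq_cos_div_sin, hsin]; field_simp
  rw [this, Real.norm_eq_abs, abs_div, abs_mul, abs_pow,
    div_le_div_iff₀ (by positivity) (by positivity)]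
  calc |x * cos x - sin x| * (2 * |sinc x|) ≤ |x| ^ 3 / 2 * (2 * |sinc x|) := by
        gcongr; exact abs_mul_cos_sub_sin_le x
    _ = |x| * (|x| ^ 2 * |sinc x|) := by ring

lemma sum_range_sin_nat_mul_mul_two_mul_sin_half (n : ℕ) (θ : ℝ) :
    (∑ j ∈ Finset.range n, sin (j * θ)) * (2 * sin (θ / 2)) =
      cos (θ / 2) - cos ((2 * n - 1) * θ / 2) := by
  induction n with
  | zero => rw [Finset.sum_range_zero, ← cos_neg]; ring_nf
  | succ n ih =>
    have hstep : cos ((2 * n - 1) * θ / 2) - cos ((2 * (n + 1 : ℕ) - 1) * θ / 2) =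
        sin (n * θ) * (2 * sin (θ / 2)) := by
      push_cast
      rw [cos_sub_cos, show ((2 * n - 1) * θ / 2 + (2 * (n + 1) - 1) * θ / 2) / 2 = n * θ by ring,
        show ((2 * n - 1) * θ / 2 - (2 * (n + 1) - 1) * θ / 2) / 2 = -(θ / 2) by ring, sin_neg]
      ring
    rw [Finset.sum_range_succ, add_mul, ih, ← hstep]
    ring

lemma sum_range_sin_nat_mul {θ : ℝ} (hθ : sin (θ / 2) ≠ 0) (n : ℕ) :
    ∑ j ∈ Finset.range n, sin (j * θ) =
      (cos (θ / 2) - cos ((2 * n - 1) * θ / 2)) / (2 * sin (θ / 2)) :=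
  eq_div_of_mul_eq (by positivity) (sum_range_sin_nat_mul_mul_two_mul_sin_half n θ)

lemma cos_two_mul_sub_one_div (w : ℝ) : (cos (2 * w) - 1) / (2 * sin (2 * w)) = -tan w / 2 := by
  rw [cos_two_mul, sin_two_mul, tan_eq_sin_div_cos, cos_sq']
  rcases eq_or_ne (sin w) 0 with h | h
  · simp [h]
  rcases eq_or_ne (cos w) 0 with h' | h'
  · simp [h']
  field_simp
  ring

lemma cos_two_mul_add_one_div (w : ℝ) : (cos (2 * w) + 1) / (2 * sin (2 * w)) = cot w / 2 := by
  rw [cos_two_mul, sin_two_mul, cot_eq_cos_div_sin]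
  rcases eq_or_ne (sin w) 0 with h | h
  · simp [h]
  rcases eq_or_ne (cos w) 0 with h' | h'
  · simp [h']
  field_simp
  ring

lemma cos_mul_pi_div_two_of_mod_four_eq_zero {q : ℕ} (hq : q % 4 = 0) : cos (q * π / 2) = 1 := by
  obtain ⟨n, rfl⟩ : ∃ n, q = 2 * (2 * n) := ⟨q / 4, by omega⟩
  rw [show ((2 * (2 * n) : ℕ) : ℝ) * π / 2 = (2 * n : ℕ) * π by push_cast; ring, cos_nat_mul_pi,
    (even_two_mul n).neg_one_pow]

lemma cos_mul_pi_div_two_of_mod_four_eq_two {q : ℕ} (hq : q % 4 = 2) : cos (q * π / 2) = -1 := by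
  obtain ⟨n, rfl⟩ : ∃ n, q = 2 * (2 * n + 1) := ⟨q / 4, by omega⟩
  rw [show ((2 * (2 * n + 1) : ℕ) : ℝ) * π / 2 = (2 * n + 1 : ℕ) * π by push_cast; ring,
    cos_nat_mul_pi, (odd_two_mul_add_one n).neg_one_pow]

lemma sin_mul_pi_div_two_of_even {q : ℕ} (hq : Even q) : sin (q * π / 2) = 0 := by
  obtain ⟨n, rfl⟩ := hq
  rw [show ((n + n : ℕ) : ℝ) * π / 2 = n * π by push_cast; ring, sin_nat_mul_pi]

lemma integral_cos_mul {c : ℝ} (hc : c ≠ 0) (a b : ℝ) :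
    ∫ x in a..b, cos (c * x) = (sin (c * b) - sin (c * a)) / c := by
  rw [intervalIntegral.integral_comp_mul_left cos hc, integral_cos, smul_eq_mul, inv_mul_eq_div]

lemma integral_cos_mul_sub_cos_mul {c d : ℝ} (hc : c ≠ 0) (hd : d ≠ 0) (a b : ℝ) :
    ∫ x in a..b, (cos (c * x) - cos (d * x)) =
      (sin (c * b) / c - sin (d * b) / d) - (sin (c * a) / c - sin (d * a) / d) := by
  have hc' : Continuous fun x => cos (c * x) := by fun_prop
  have hd' : Continuous fun x => cos (d * x) := by fun_prop
  rw [intervalIntegral.integral_sub (hc'.intervalIntegrable _ _) (hd'.intervalIntegrable _ _),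
    integral_cos_mul hc, integral_cos_mul hd]
  ring

lemma sin_mul_mul_div_add_one_of_even {q : ℕ} (hq : Even q) (ℓ : ℕ) {k : ℝ} (hk : k + 1 ≠ 0) :
    sin (q * k * (ℓ * π / (k + 1))) = -sin (q * (ℓ * π / (k + 1))) := by
  have h : q * k * (ℓ * π / (k + 1)) = (q * ℓ : ℕ) * π - q * (ℓ * π / (k + 1)) := by
    push_cast; field_simp; ring
  rw [h, sin_nat_mul_pi_sub, (hq.mul_right ℓ).neg_one_pow, one_mul]

lemma sin_mul_mul_div_sub_one_of_even {q : ℕ} (hq : Even q) (ℓ : ℕ) {k : ℝ} (hk : k - 1 ≠ 0) :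
    sin (q * k * (ℓ * π / (k - 1))) = sin (q * (ℓ * π / (k - 1))) := by
  have h : q * k * (ℓ * π / (k - 1)) = q * (ℓ * π / (k - 1)) + (q * ℓ : ℕ) * π := by
    push_cast; field_simp; ring
  rw [h, sin_add_nat_mul_pi, (hq.mul_right ℓ).neg_one_pow, one_mul]

/-- The sum `S (k)` at `k = 2 * m`. -/
noncomputable def alternatingIntegralSum (q m : ℕ) : ℝ :=
  ∑ ℓ ∈ Finset.Icc 1 m,
    ((∫ x in ((ℓ : ℝ) - 1) * π / (2 * m - 1)..ℓ * π / (2 * m + 1),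
        (cos (q * x) - cos (q * (2 * m) * x))) -
      ∫ x in ℓ * π / (2 * m + 1)..ℓ * π / (2 * m - 1), (cos (q * x) - cos (q * (2 * m) * x)))

lemma alternatingIntegralSum_eq_sum_sin {q m : ℕ} (hq : Even q) (hq0 : q ≠ 0) (hm : m ≠ 0) :
    alternatingIntegralSum q m =
      2 * (1 / q + 1 / (q * (2 * m))) *
          ∑ j ∈ Finset.range (m + 1), sin (j * (q * π / (2 * m + 1)))
        - 2 * (1 / q - 1 / (q * (2 * m))) * ∑ j ∈ Finset.range m, sin (j * (q * π / (2 * m - 1)))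
        - (1 / q - 1 / (q * (2 * m))) * sin (m * (q * π / (2 * m - 1))) := by
  have hq0' : (q : ℝ) ≠ 0 := by exact_mod_cast hq0
  have hk : (q : ℝ) * (2 * m) ≠ 0 := by positivity
  have hk₁ : (2 * m : ℝ) + 1 ≠ 0 := by positivity
  have hk₂ : (2 * m : ℝ) - 1 ≠ 0 := by
    have : (1 : ℝ) ≤ m := by exact_mod_cast Nat.one_le_iff_ne_zero.mpr hm
    linarith
  set θ : ℝ := q * π / (2 * m + 1)
  set φ : ℝ := q * π / (2 * m - 1)
  have hterm : ∀ j : ℕ,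
      ((∫ x in (((j + 1 : ℕ) : ℝ) - 1) * π / (2 * m - 1)..(j + 1 : ℕ) * π / (2 * m + 1),
          (cos (q * x) - cos (q * (2 * m) * x))) -
        ∫ x in (j + 1 : ℕ) * π / (2 * m + 1)..(j + 1 : ℕ) * π / (2 * m - 1),
          (cos (q * x) - cos (q * (2 * m) * x))) =
      2 * (1 / q + 1 / (q * (2 * m))) * sin ((j + 1 : ℕ) * θ)
        - (1 / q - 1 / (q * (2 * m))) * sin (j * φ)
        - (1 / q - 1 / (q * (2 * m))) * sin ((j + 1 : ℕ) * φ) := by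
    intro j
    have hj : ((j + 1 : ℕ) : ℝ) - 1 = (j : ℕ) := by push_cast; ring
    rw [integral_cos_mul_sub_cos_mul hq0' hk, integral_cos_mul_sub_cos_mul hq0' hk, hj,
      sin_mul_mul_div_add_one_of_even hq _ hk₁, sin_mul_mul_div_sub_one_of_even hq _ hk₂,
      sin_mul_mul_div_sub_one_of_even hq _ hk₂]
    have hθ : ∀ ℓ : ℝ, q * (ℓ * π / (2 * m + 1)) = ℓ * θ := fun ℓ => by ring
    have hφ : ∀ ℓ : ℝ, q * (ℓ * π / (2 * m - 1)) = ℓ * φ := fun ℓ => by ring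
    simp only [hθ, hφ]
    ring
  have hφsum := (Finset.sum_range_succ' (fun j : ℕ => sin (j * φ)) m).symm.trans
    (Finset.sum_range_succ (fun j : ℕ => sin (j * φ)) m)
  have hshift : ∀ g : ℕ → ℝ, ∑ ℓ ∈ Finset.Icc 1 m, g ℓ = ∑ j ∈ Finset.range m, g (j + 1) := by
    intro g
    rw [Finset.range_eq_Ico, Finset.sum_Ico_add', Finset.Ico_add_one_right_eq_Icc]
  rw [alternatingIntegralSum, hshift, Finset.sum_congr rfl fun j _ => hterm j,
    Finset.sum_range_succ' (fun j : ℕ => sin (j * θ)), Finset.sum_sub_distrib,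
    Finset.sum_sub_distrib, ← Finset.mul_sum, ← Finset.mul_sum, ← Finset.mul_sum]
  simp only [Nat.cast_zero, zero_mul, sin_zero, add_zero] at hφsum ⊢
  rw [hφsum]
  ring

noncomputable def quarterAngle (q : ℕ) (d : ℝ) : ℝ := q * π / (4 * d)

lemma alternatingIntegralSum_eq_quarterAngle {q m : ℕ} (hq : Even q) (hq0 : 0 < q)
    (hqm : (q : ℝ) < 2 * (2 * m - 1)) :
    alternatingIntegralSum q m =
      2 * (1 / q + 1 / (q * (2 * m))) *
          ((cos (2 * quarterAngle q (2 * m + 1)) - cos (q * π / 2)) /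
            (2 * sin (2 * quarterAngle q (2 * m + 1))))
        - 2 * (1 / q - 1 / (q * (2 * m))) *
          ((cos (2 * quarterAngle q (2 * m - 1)) - cos (q * π / 2)) /
            (2 * sin (2 * quarterAngle q (2 * m - 1))))
        - (1 / q - 1 / (q * (2 * m))) * sin (q * π / 2 + 2 * quarterAngle q (2 * m - 1)) := by
  have hq0' : (0 : ℝ) < q := by exact_mod_cast hq0
  have hm : (1 : ℝ) < 2 * m := by linarith
  have hm0 : m ≠ 0 := by rintro rfl; norm_num at hm
  have hsin : ∀ d : ℝ, q < 2 * d → sin (q * π / d / 2) ≠ 0 := by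
    intro d hd
    have hd0 : 0 < d := by linarith
    refine (sin_pos_of_pos_of_lt_pi (by positivity) ?_).ne'
    rw [div_div, div_lt_iff₀ (by positivity)]
    nlinarith [pi_pos]
  rw [alternatingIntegralSum_eq_sum_sin hq hq0.ne' hm0,
    sum_range_sin_nat_mul (hsin _ (by linarith)),
    sum_range_sin_nat_mul (hsin _ hqm)]
  have hd₂ : (2 * m : ℝ) - 1 ≠ 0 := by linarith
  have hhalf₁ : q * π / (2 * m + 1) / 2 = 2 * quarterAngle q (2 * m + 1) := by
    rw [quarterAngle]; field_simp; ring
  have hhalf₂ : q * π / (2 * m - 1) / 2 = 2 * quarterAngle q (2 * m - 1) := by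
    rw [quarterAngle]; field_simp; ring
  have hend₁ : (2 * ((m + 1 : ℕ) : ℝ) - 1) * (q * π / (2 * m + 1)) / 2 = q * π / 2 := by
    push_cast; field_simp; ring
  have hend₂ : (2 * (m : ℝ) - 1) * (q * π / (2 * m - 1)) / 2 = q * π / 2 := by
    field_simp
  have hlast : m * (q * π / (2 * m - 1)) = q * π / 2 + 2 * quarterAngle q (2 * m - 1) := by
    have h : (2 * m - 1) * (q * π / (2 * m - 1)) = q * π := mul_div_cancel₀ _ hd₂
    rw [quarterAngle, mul_comm 4, ← div_div]
    linear_combination (1 / 2 : ℝ) * h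
  rw [hhalf₁, hhalf₂, hend₁, hend₂, hlast]

lemma tendsto_quarterAngle {q : ℕ} (hq : 0 < q) : Tendsto (quarterAngle q) atTop (𝓝[>] 0) := by
  refine tendsto_nhdsWithin_iff.mpr
    ⟨tendsto_const_nhds.div_atTop (tendsto_id.const_mul_atTop four_pos), ?_⟩
  filter_upwards [eventually_gt_atTop 0] with d hd
  exact Set.mem_Ioi.mpr (by unfold quarterAngle; positivity)

lemma tendsto_quarterAngle_two_mul_add_one {q : ℕ} (hq : 0 < q) :
    Tendsto (fun m : ℕ => quarterAngle q (2 * m + 1)) atTop (𝓝[>] 0) :=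
  (tendsto_quarterAngle hq).comp <| tendsto_atTop_add_const_right _ _ <|
    tendsto_natCast_atTop_atTop.const_mul_atTop two_pos

lemma tendsto_quarterAngle_two_mul_sub_one {q : ℕ} (hq : 0 < q) :
    Tendsto (fun m : ℕ => quarterAngle q (2 * m - 1)) atTop (𝓝[>] 0) :=
  (tendsto_quarterAngle hq).comp <| tendsto_atTop_add_const_right _ _ <|
    tendsto_natCast_atTop_atTop.const_mul_atTop two_pos

lemma tendsto_one_div_mul_two_mul (q : ℕ) :
    Tendsto (fun m : ℕ => 1 / (q * (2 * (m : ℝ)))) atTop (𝓝 0) :=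
  (tendsto_const_div_atTop_nhds_zero_nat (1 / (2 * q) : ℝ)).congr fun m => by ring

lemma tendsto_sin_mul_pi_div_two_add {q : ℕ} (hq : Even q) {w : ℕ → ℝ}
    (hw : Tendsto w atTop (𝓝 0)) : Tendsto (fun m => sin (q * π / 2 + 2 * w m)) atTop (𝓝 0) := by
  have h : Tendsto (fun y => sin (q * π / 2 + 2 * y)) (𝓝 0) (𝓝 (sin (q * π / 2 + 2 * 0))) :=
    (by fun_prop : Continuous fun y => sin (q * π / 2 + 2 * y)).tendsto 0
  have h' := h.comp hw
  rwa [mul_zero, add_zero, sin_mul_pi_div_two_of_even hq] at h'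

lemma eventually_lt_two_mul_two_mul_sub_one (q : ℕ) :
    ∀ᶠ m : ℕ in atTop, (q : ℝ) < 2 * (2 * m - 1) := by
  filter_upwards [eventually_gt_atTop q] with m hm
  have : (q : ℝ) + 1 ≤ m := by exact_mod_cast hm
  linarith

lemma alternatingIntegralSum_eq_tan {q m : ℕ} (hq0 : 0 < q) (hq4 : q % 4 = 0)
    (hqm : (q : ℝ) < 2 * (2 * m - 1)) :
    alternatingIntegralSum q m =
      -(1 / q + 1 / (q * (2 * m))) * tan (quarterAngle q (2 * m + 1))
        + (1 / q - 1 / (q * (2 * m))) * tan (quarterAngle q (2 * m - 1))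
        - (1 / q - 1 / (q * (2 * m))) * sin (q * π / 2 + 2 * quarterAngle q (2 * m - 1)) := by
  have hq : Even q := Nat.even_iff.mpr (by omega)
  rw [alternatingIntegralSum_eq_quarterAngle hq hq0 hqm, cos_mul_pi_div_two_of_mod_four_eq_zero hq4,
    cos_two_mul_sub_one_div, cos_two_mul_sub_one_div]
  ring

lemma alternatingIntegralSum_eq_cot {q m : ℕ} (hq4 : q % 4 = 2)
    (hqm : (q : ℝ) < 2 * (2 * m - 1)) :
    alternatingIntegralSum q m = 16 / (q ^ 2 * π)
        + (1 / q + 1 / (q * (2 * m))) *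
          (cot (quarterAngle q (2 * m + 1)) - (quarterAngle q (2 * m + 1))⁻¹)
        - (1 / q - 1 / (q * (2 * m))) *
          (cot (quarterAngle q (2 * m - 1)) - (quarterAngle q (2 * m - 1))⁻¹)
        - (1 / q - 1 / (q * (2 * m))) * sin (q * π / 2 + 2 * quarterAngle q (2 * m - 1)) := by
  have hq : Even q := Nat.even_iff.mpr (by omega)
  have hq0 : 0 < q := by omega
  have hm : (m : ℝ) ≠ 0 := by rintro h; rw [h] at hqm; linarith
  have hmain : (1 / q + 1 / (q * (2 * m))) * (quarterAngle q (2 * m + 1))⁻¹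
      - (1 / q - 1 / (q * (2 * m))) * (quarterAngle q (2 * m - 1))⁻¹ = (16 / (q ^ 2 * π) : ℝ) := by
    unfold quarterAngle
    field_simp
    ring
  rw [alternatingIntegralSum_eq_quarterAngle hq hq0 hqm, cos_mul_pi_div_two_of_mod_four_eq_two hq4,
    sub_neg_eq_add, sub_neg_eq_add, cos_two_mul_add_one_div, cos_two_mul_add_one_div]
  linear_combination hmain

lemma tendsto_alternatingIntegralSum_of_mod_four_eq_zero {q : ℕ} (hq0 : 0 < q)
    (hq4 : q % 4 = 0) : Tendsto (alternatingIntegralSum q) atTop (𝓝 0) := by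
  have hq : Even q := Nat.even_iff.mpr (by omega)
  have hw₁ := (tendsto_quarterAngle_two_mul_add_one hq0).mono_right nhdsWithin_le_nhds
  have hw₂ := (tendsto_quarterAngle_two_mul_sub_one hq0).mono_right nhdsWithin_le_nhds
  have htan : Tendsto tan (𝓝 0) (𝓝 0) := by
    simpa using ((continuousAt_tan (x := 0)).mpr (by simp)).tendsto
  have hc := tendsto_one_div_mul_two_mul q
  have hc₁ := (tendsto_const_nhds (x := 1 / (q : ℝ))).add hc
  have hc₂ := (tendsto_const_nhds (x := 1 / (q : ℝ))).sub hc
  have hlim := ((hc₁.neg.mul (htan.comp hw₁)).add (hc₂.mul (htan.comp hw₂))).sub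
    (hc₂.mul (tendsto_sin_mul_pi_div_two_add hq hw₂))
  simp only [add_zero, sub_zero, mul_zero, sub_self] at hlim
  refine hlim.congr' ?_
  filter_upwards [eventually_lt_two_mul_two_mul_sub_one q] with m hm
  rw [alternatingIntegralSum_eq_tan hq0 hq4 hm]
  rfl

lemma tendsto_alternatingIntegralSum_of_mod_four_eq_two {q : ℕ} (hq4 : q % 4 = 2) :
    Tendsto (alternatingIntegralSum q) atTop (𝓝 (16 / (q ^ 2 * π))) := by
  have hq : Even q := Nat.even_iff.mpr (by omega)
  have hq0 : 0 < q := by omega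
  have hw₁ := tendsto_quarterAngle_two_mul_add_one hq0
  have hw₂ := tendsto_quarterAngle_two_mul_sub_one hq0
  have hcot := tendsto_cot_sub_inv.mono_left (nhdsGT_le_nhdsNE (0 : ℝ))
  have hc := tendsto_one_div_mul_two_mul q
  have hc₁ := (tendsto_const_nhds (x := 1 / (q : ℝ))).add hc
  have hc₂ := (tendsto_const_nhds (x := 1 / (q : ℝ))).sub hc
  have hlim := (((tendsto_const_nhds (x := 16 / ((q : ℝ) ^ 2 * π))).add
    (hc₁.mul (hcot.comp hw₁))).sub (hc₂.mul (hcot.comp hw₂))).sub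
    (hc₂.mul (tendsto_sin_mul_pi_div_two_add hq (hw₂.mono_right nhdsWithin_le_nhds)))
  simp only [add_zero, sub_zero, mul_zero] at hlim
  refine hlim.congr' ?_
  filter_upwards [eventually_lt_two_mul_two_mul_sub_one q] with m hm
  rw [alternatingIntegralSum_eq_cot hq4 hm]
  rfl

end TrigIntegral

theorem trig_integral_even_q_even_k_general (q : ℕ) (hpos : 0 < q) :
    (q % 4 = 0 →
      Tendsto (fun m : ℕ =>
        ∑ ℓ ∈ Finset.Icc 1 m,
          ((∫ x in (((ℓ : ℝ) - 1) * π / (2 * (m : ℝ) - 1))..((ℓ : ℝ) * π / (2 * (m : ℝ) + 1)),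
              (Real.cos ((q : ℝ) * x) - Real.cos ((q : ℝ) * (2 * (m : ℝ)) * x))) -
           (∫ x in ((ℓ : ℝ) * π / (2 * (m : ℝ) + 1))..((ℓ : ℝ) * π / (2 * (m : ℝ) - 1)),
              (Real.cos ((q : ℝ) * x) - Real.cos ((q : ℝ) * (2 * (m : ℝ)) * x)))))
        atTop (𝓝 0)) ∧
    (q % 4 = 2 →
      Tendsto (fun m : ℕ =>
        ∑ ℓ ∈ Finset.Icc 1 m,
          ((∫ x in (((ℓ : ℝ) - 1) * π / (2 * (m : ℝ) - 1))..((ℓ : ℝ) * π / (2 * (m : ℝ) + 1)),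
              (Real.cos ((q : ℝ) * x) - Real.cos ((q : ℝ) * (2 * (m : ℝ)) * x))) -
           (∫ x in ((ℓ : ℝ) * π / (2 * (m : ℝ) + 1))..((ℓ : ℝ) * π / (2 * (m : ℝ) - 1)),
              (Real.cos ((q : ℝ) * x) - Real.cos ((q : ℝ) * (2 * (m : ℝ)) * x)))))
        atTop (𝓝 (16 / ((q : ℝ) ^ 2 * π)))) :=
  ⟨TrigIntegral.tendsto_alternatingIntegralSum_of_mod_four_eq_zero hpos,
    TrigIntegral.tendsto_alternatingIntegralSum_of_mod_four_eq_two⟩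

theorem trig_integral_even_q_even_k (q : ℕ) (hq : Even q) (hpos : 0 < q) :
    (q % 4 = 0 →
      Tendsto (fun m : ℕ =>
        ∑ ℓ ∈ Finset.Icc 1 m,
          ((∫ x in (((ℓ : ℝ) - 1) * π / (2 * (m : ℝ) - 1))..((ℓ : ℝ) * π / (2 * (m : ℝ) + 1)),
              (Real.cos ((q : ℝ) * x) - Real.cos ((q : ℝ) * (2 * (m : ℝ)) * x))) -
           (∫ x in ((ℓ : ℝ) * π / (2 * (m : ℝ) + 1))..((ℓ : ℝ) * π / (2 * (m : ℝ) - 1)),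
              (Real.cos ((q : ℝ) * x) - Real.cos ((q : ℝ) * (2 * (m : ℝ)) * x)))))
        atTop (𝓝 0)) ∧
    (q % 4 = 2 →
      Tendsto (fun m : ℕ =>
        ∑ ℓ ∈ Finset.Icc 1 m,
          ((∫ x in (((ℓ : ℝ) - 1) * π / (2 * (m : ℝ) - 1))..((ℓ : ℝ) * π / (2 * (m : ℝ) + 1)),
              (Real.cos ((q : ℝ) * x) - Real.cos ((q : ℝ) * (2 * (m : ℝ)) * x))) -
           (∫ x in ((ℓ : ℝ) * π / (2 * (m : ℝ) + 1))..((ℓ : ℝ) * π / (2 * (m : ℝ) - 1)),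
              (Real.cos ((q : ℝ) * x) - Real.cos ((q : ℝ) * (2 * (m : ℝ)) * x)))))
        atTop (𝓝 (16 / ((q : ℝ) ^ 2 * π)))) :=
  trig_integral_even_q_even_k_general q hpos
end
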